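/- arXiv:0911.1153 — 10 statements merged into one kernel-verified Lean document; each statement's English description precedes it below -/
import Mathlib

section
/- Let X be a finite set and P a substochastic transition matrix on X (P_{xy} ≥ 0, row sums ≤ 1) that is loop-free, i.e. (P^k)_{xx} = 0 for all k ≥ 1 and x ∈ X. Then the series Q = P + P^2 + P^3 + ... converges entrywise and all entries of Q satisfy 0 ≤ Q_{xy} ≤ 1, with Q_{xx} = 0 for all x. -/
private lemma matpow_nonneg {X : Type*} [Fintype X] [DecidableEq X] (M : Matrix X X ℝ)
    (h : ∀ x y, 0 ≤ M x y) : ∀ k x y, 0 ≤ (M ^ k) x y := by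
  intro k
  induction k with
  | zero =>
    intro x y
    rw [pow_zero]
    by_cases hxy : x = y <;> simp [Matrix.one_apply, hxy]
  | succ k ih =>
    intro x y
    rw [pow_succ, Matrix.mul_apply]
    exact Finset.sum_nonneg fun w _ => mul_nonneg (ih x w) (h w y)

private lemma matpow_le {X : Type*} [Fintype X] [DecidableEq X] (A P : Matrix X X ℝ)
    (hA : ∀ x y, 0 ≤ A x y) (hAP : ∀ x y, A x y ≤ P x y) :
    ∀ k x y, (A ^ k) x y ≤ (P ^ k) x y := by
  have hP : ∀ x y, 0 ≤ P x y := fun x y => le_trans (hA x y) (hAP x y)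
  intro k
  induction k with
  | zero => intro x y; simp
  | succ k ih =>
    intro x y
    rw [pow_succ, pow_succ, Matrix.mul_apply, Matrix.mul_apply]
    exact Finset.sum_le_sum fun w _ =>
      mul_le_mul (ih x w) (hAP w y) (hA w y) (matpow_nonneg P hP k x w)

/-- For a loop-free substochastic matrix `P` on a finite set `X`,
the series `Q = P + P² + P³ + ⋯` converges entrywise, `0 ≤ Q x y ≤ 1`, and `Q x x = 0`. -/
theorem loopFree_Q_exists {X : Type*} [Fintype X] [DecidableEq X] (P : Matrix X X ℝ)
    (hpos : ∀ x y, 0 ≤ P x y) (hrow : ∀ x, ∑ y, P x y ≤ 1)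
    (hloop : ∀ k : ℕ, 1 ≤ k → ∀ x, (P ^ k) x x = 0) :
    ∃ Q : Matrix X X ℝ,
      (∀ x y, HasSum (fun k : ℕ => (P ^ (k + 1)) x y) (Q x y)) ∧
      (∀ x y, 0 ≤ Q x y ∧ Q x y ≤ 1) ∧ (∀ x, Q x x = 0) := by
  classical
  have hpowpos := matpow_nonneg P hpos
  -- Key bound on partial sums
  have key : ∀ x y (N : ℕ), ∑ k ∈ Finset.range N, (P ^ (k + 1)) x y ≤ 1 := by
    intro x y N
    set A : Matrix X X ℝ := Matrix.of (fun u v => if v = y then 0 else P u v) with hAdef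
    have hA0 : ∀ u v, 0 ≤ A u v := by
      intro u v
      by_cases hv : v = y <;> simp [hAdef, hv, hpos]
    have hAle : ∀ u v, A u v ≤ P u v := by
      intro u v
      by_cases hv : v = y <;> simp [hAdef, hv, hpos]
    have hApow := matpow_nonneg A hA0
    -- first-passage decomposition: (P^(k+1))_{x' y} = (A^k P)_{x' y}
    have hfirst : ∀ (k : ℕ) (x' : X), (P ^ (k + 1)) x' y = (A ^ k * P) x' y := by
      intro k
      induction k with
      | zero => intro x'; simp
      | succ k ih =>
        intro x'
        have hyy : (A ^ k * P) y y = 0 := by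
          have hle : (A ^ k * P) y y ≤ (P ^ (k + 1)) y y := by
            rw [pow_succ, Matrix.mul_apply, Matrix.mul_apply]
            exact Finset.sum_le_sum fun w _ =>
              mul_le_mul_of_nonneg_right (matpow_le A P hA0 hAle k y w) (hpos w y)
          have hge : 0 ≤ (A ^ k * P) y y := by
            rw [Matrix.mul_apply]
            exact Finset.sum_nonneg fun w _ => mul_nonneg (hApow k y w) (hpos w y)
          have hz := hloop (k + 1) (by omega) y
          linarith
        have step1 : (P ^ (k + 1 + 1)) x' y = ∑ v, P x' v * (P ^ (k + 1)) v y := by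
          rw [pow_succ', Matrix.mul_apply]
        rw [step1]
        have step2 : ∑ v, P x' v * (P ^ (k + 1)) v y
            = ∑ v, A x' v * (A ^ k * P) v y := by
          refine Finset.sum_congr rfl fun v _ => ?_
          by_cases hv : v = y
          · rw [hv, ih y, hyy, mul_zero, mul_zero]
          · rw [ih v]
            congr 1
            simp [hAdef, hv]
        rw [step2]
        rw [show A ^ (k + 1) * P = A * (A ^ k * P) by rw [← mul_assoc, ← pow_succ']]
        rw [Matrix.mul_apply]
    have hbound : ∀ (N : ℕ) (x' : X), ∑ k ∈ Finset.range N, (A ^ k * P) x' y ≤ 1 := by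
      intro N
      induction N with
      | zero => intro x'; simp
      | succ N ih =>
        intro x'
        rw [Finset.sum_range_succ']
        have h1 : ∑ k ∈ Finset.range N, (A ^ (k + 1) * P) x' y
            = ∑ v, A x' v * ∑ k ∈ Finset.range N, (A ^ k * P) v y := by
          simp only [Finset.mul_sum]
          rw [Finset.sum_comm]
          refine Finset.sum_congr rfl fun k _ => ?_
          rw [show A ^ (k + 1) * P = A * (A ^ k * P) by rw [← mul_assoc, ← pow_succ']]
          rw [Matrix.mul_apply]
        have h2 : ∑ v, A x' v * ∑ k ∈ Finset.range N, (A ^ k * P) v y ≤ ∑ v, A x' v := by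
          refine Finset.sum_le_sum fun v _ => ?_
          calc A x' v * ∑ k ∈ Finset.range N, (A ^ k * P) v y
              ≤ A x' v * 1 := mul_le_mul_of_nonneg_left (ih v) (hA0 x' v)
            _ = A x' v := mul_one _
        have h3 : ∑ v, A x' v + P x' y = ∑ v, P x' v := by
          have : ∀ v : X, P x' v = A x' v + (if v = y then P x' v else 0) := by
            intro v
            by_cases hv : v = y <;> simp [hAdef, hv]
          rw [Finset.sum_congr rfl fun v _ => this v, Finset.sum_add_distrib,
            Finset.sum_ite_eq' Finset.univ y (fun v => P x' v)]
          simp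
        have h4 : (A ^ 0 * P) x' y = P x' y := by simp
        have h5 := hrow x'
        have h6 := h1 ▸ h2
        linarith
    calc ∑ k ∈ Finset.range N, (P ^ (k + 1)) x y
        = ∑ k ∈ Finset.range N, (A ^ k * P) x y :=
          Finset.sum_congr rfl fun k _ => hfirst k x
      _ ≤ 1 := hbound N x
  have hsummable : ∀ x y, Summable (fun k : ℕ => (P ^ (k + 1)) x y) := by
    intro x y
    exact summable_of_sum_range_le (fun k => hpowpos (k + 1) x y) (key x y)
  refine ⟨Matrix.of (fun x y => ∑' k : ℕ, (P ^ (k + 1)) x y), fun x y => ?_, fun x y => ⟨?_, ?_⟩,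
    fun x => ?_⟩
  · exact (hsummable x y).hasSum
  · exact tsum_nonneg fun k => hpowpos (k + 1) x y
  · exact Summable.tsum_le_of_sum_range_le (hsummable x y) (key x y)
  · have hz : (fun k : ℕ => (P ^ (k + 1)) x x) = fun _ => 0 :=
      funext fun k => hloop (k + 1) (by omega) x
    simp only [Matrix.of_apply, hz, tsum_zero]
end

section
/- Let X be a finite set, N ≤ |X|, Φ_i, Ψ_i : X → ℂ (i = 1,...,N) with invertible Gram matrix G_{ij} = Σ_x Φ_i(x)Ψ_j(x). Define the normalized weight of an N-point configuration {x_1,...,x_N} as det[Φ_i(x_j)]·det[Ψ_i(x_j)]/Z with Z = Σ W. Then for every n and distinct points y_1,...,y_n ∈ X, the n-th correlation function ρ_n(y_1,...,y_n) = Σ_{configurations X ⊇ {y_1,...,y_n}} W(X)/Z equals det[K(y_i,y_j)]_{i,j=1}^n, where K(x,y) = Σ_{i,j=1}^N (G^{-t})_{ij} Φ_i(x) Ψ_j(y). -/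
open Finset Equiv Matrix

lemma perm_sum_det {N : ℕ} (C : Matrix (Fin N) (Fin N) ℂ) (σ : Equiv.Perm (Fin N)) :
    ∑ τ : Equiv.Perm (Fin N),
      ((Equiv.Perm.sign σ : ℂ) * (Equiv.Perm.sign τ : ℂ)) * ∏ j, C (σ j) (τ j) = C.det := by
  rw [← Equiv.sum_comp (Equiv.mulRight σ)
    (fun τ => ((Equiv.Perm.sign σ : ℂ) * (Equiv.Perm.sign τ : ℂ)) * ∏ j, C (σ j) (τ j))]
  have key : ∀ π : Equiv.Perm (Fin N),
      ((Equiv.Perm.sign σ : ℂ) * (Equiv.Perm.sign ((Equiv.mulRight σ) π) : ℂ)) *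
        ∏ j, C (σ j) (((Equiv.mulRight σ) π) j)
      = (Equiv.Perm.sign π : ℂ) * ∏ k, C k (π k) := by
    intro π
    have h1 : ∏ j, C (σ j) (((Equiv.mulRight σ) π) j) = ∏ k, C k (π k) := by
      rw [← Equiv.prod_comp σ (fun k => C k (π k))]
      rfl
    have h2 : ((Equiv.Perm.sign σ : ℂ) * (Equiv.Perm.sign ((Equiv.mulRight σ) π) : ℂ))
        = (Equiv.Perm.sign π : ℂ) := by
      show ((Equiv.Perm.sign σ : ℂ) * (Equiv.Perm.sign (π * σ) : ℂ)) = _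
      rw [Equiv.Perm.sign_mul]
      push_cast
      rcases Int.units_eq_one_or (Equiv.Perm.sign σ) with h | h <;>
        rcases Int.units_eq_one_or (Equiv.Perm.sign π) with h' | h' <;> simp [h, h']
    rw [h1, h2]
  rw [Finset.sum_congr rfl (fun π _ => key π)]
  rw [← Matrix.det_transpose C, Matrix.det_apply]
  simp [Matrix.transpose_apply, Units.smul_def, zsmul_eq_mul]

lemma andreief {X : Type*} [Fintype X] {N : ℕ} (φ ψ : Fin N → X → ℂ) :
    ∑ f : Fin N → X,
      (Matrix.of fun i j => φ i (f j)).det * (Matrix.of fun i j => ψ i (f j)).det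
      = (Nat.factorial N : ℂ) * (Matrix.of fun i j => ∑ x, φ i x * ψ j x).det := by
  have expand : ∀ f : Fin N → X,
      (Matrix.of fun i j => φ i (f j)).det * (Matrix.of fun i j => ψ i (f j)).det
      = ∑ σ : Equiv.Perm (Fin N), ∑ τ : Equiv.Perm (Fin N),
          ((Equiv.Perm.sign σ : ℂ) * (Equiv.Perm.sign τ : ℂ)) *
            ∏ j, (φ (σ j) (f j) * ψ (τ j) (f j)) := by
    intro f
    rw [Matrix.det_apply', Matrix.det_apply', Finset.sum_mul_sum]
    refine Finset.sum_congr rfl fun σ _ => Finset.sum_congr rfl fun τ _ => ?_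
    simp only [Matrix.of_apply, Units.smul_def, zsmul_eq_mul, Finset.prod_mul_distrib]
    push_cast
    ring
  rw [Finset.sum_congr rfl (fun f _ => expand f), Finset.sum_comm]
  rw [Finset.sum_congr rfl (fun σ _ => Finset.sum_comm)]
  have swap : ∀ σ τ : Equiv.Perm (Fin N),
      ∑ f : Fin N → X, ((Equiv.Perm.sign σ : ℂ) * (Equiv.Perm.sign τ : ℂ)) *
          ∏ j, (φ (σ j) (f j) * ψ (τ j) (f j))
      = ((Equiv.Perm.sign σ : ℂ) * (Equiv.Perm.sign τ : ℂ)) *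
          ∏ j, ((Matrix.of fun i j => ∑ x, φ i x * ψ j x) (σ j) (τ j)) := by
    intro σ τ
    rw [← Finset.mul_sum]
    congr 1
    rw [← Fintype.prod_sum (f := fun j x => φ (σ j) x * ψ (τ j) x)]
    rfl
  calc ∑ σ : Equiv.Perm (Fin N), ∑ τ : Equiv.Perm (Fin N), ∑ f : Fin N → X,
        ((Equiv.Perm.sign σ : ℂ) * (Equiv.Perm.sign τ : ℂ)) *
          ∏ j, (φ (σ j) (f j) * ψ (τ j) (f j))
      = ∑ σ : Equiv.Perm (Fin N), (Matrix.of fun i j => ∑ x, φ i x * ψ j x).det := by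
        refine Finset.sum_congr rfl fun σ _ => ?_
        rw [Finset.sum_congr rfl (fun τ _ => swap σ τ)]
        exact perm_sum_det _ σ
    _ = (Nat.factorial N : ℂ) * (Matrix.of fun i j => ∑ x, φ i x * ψ j x).det := by
        rw [Finset.sum_const, Finset.card_univ, Fintype.card_perm, Fintype.card_fin,
          nsmul_eq_mul]

lemma det_sum_bool {n : ℕ} (v : Fin n → Bool → (Fin n → ℂ)) :
    ∑ t : Fin n → Bool, (Matrix.of fun b a => v b (t b) a).det
    = (Matrix.of fun b a => v b true a + v b false a).det := by
  set f := (Matrix.detRowAlternating (n := Fin n) (R := ℂ)).toMultilinearMap with hf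
  have h := f.map_sum (g := fun b (c : Bool) => v b c)
  simp only [Fintype.sum_bool] at h
  have e1 : ∀ t : Fin n → Bool,
      (Matrix.of fun b a => v b (t b) a).det = f (fun i => v i (t i)) := fun t => rfl
  have e2 : (Matrix.of fun b a => v b true a + v b false a).det
      = f (fun i => v i true + v i false) := rfl
  rw [e2, h]
  exact Finset.sum_congr rfl fun t _ => e1 t

lemma sum_bool_det {n : ℕ} (M : Matrix (Fin n) (Fin n) ℂ) :
    ∑ t : Fin n → Bool, (∏ i, (if t i then (-1:ℂ) else 1)) *
      ((1 : Matrix (Fin n) (Fin n) ℂ)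
        - M * Matrix.diagonal (fun a => if t a then (1:ℂ) else 0)).det = M.det := by
  set v : Fin n → Bool → (Fin n → ℂ) := fun b c a =>
    if c then M a b - (if b = a then 1 else 0) else (if b = a then 1 else 0) with hv
  have step : ∀ t : Fin n → Bool,
      (∏ i, (if t i then (-1:ℂ) else 1)) *
        ((1 : Matrix (Fin n) (Fin n) ℂ)
          - M * Matrix.diagonal (fun a => if t a then (1:ℂ) else 0)).det
      = (Matrix.of fun b a => v b (t b) a).det := by
    intro t
    set A := (1 : Matrix (Fin n) (Fin n) ℂ)
      - M * Matrix.diagonal (fun a => if t a then (1:ℂ) else 0) with hA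
    have h1 : A.det = (Matrix.of fun b a => A a b).det := (Matrix.det_transpose A).symm
    rw [h1, ← Matrix.det_mul_column (fun b => if t b then (-1:ℂ) else 1)]
    congr 1
    ext b a
    simp only [Matrix.of_apply, hA, Matrix.sub_apply, Matrix.one_apply,
      Matrix.mul_diagonal, hv]
    by_cases hb : t b <;> by_cases hab : a = b <;>
      [skip; (have hba : ¬ b = a := fun h => hab h.symm); skip;
       (have hba : ¬ b = a := fun h => hab h.symm)] <;>
      simp_all <;> ring
  rw [Finset.sum_congr rfl (fun t _ => step t), det_sum_bool]
  have : (Matrix.of fun b a => v b true a + v b false a) = Matrix.of fun b a => M a b := by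
    ext b a; simp [hv]
  rw [this, ← Matrix.det_transpose M]
  rfl

/-- biorthogonal ensembles are determinantal: for the normalized weights
`W(x₁,…,x_N)/Z` with `W = det[Φ_i(x_j)]·det[Ψ_i(x_j)]`, the `n`-th correlation function at
distinct points `y₁,…,y_n` equals `det[K(y_i,y_j)]` with
`K(x,y) = ∑_{i,j} (G^{-t})_{ij} Φ_i(x) Ψ_j(y)`. Configurations are encoded as ordered tuples
`f : Fin N → X` (non-injective tuples have weight `0` and each configuration is counted `N!`
times both in the numerator and in `Z`, so the ratio is the correlation function). -/
theorem biorthogonal_determinantal {X : Type*} [Fintype X] [DecidableEq X]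
    (N : ℕ) (hN : N ≤ Fintype.card X) (Φ Ψ : Fin N → X → ℂ)
    (G : Matrix (Fin N) (Fin N) ℂ)
    (hGdef : G = Matrix.of fun i j => ∑ x, Φ i x * Ψ j x)
    (hG : IsUnit G.det)
    (Z : ℂ)
    (hZdef : Z = ∑ f : Fin N → X,
        Matrix.det (Matrix.of fun i j => Φ i (f j)) *
        Matrix.det (Matrix.of fun i j => Ψ i (f j)))
    (hZ : Z ≠ 0)
    (n : ℕ) (y : Fin n → X) (hy : Function.Injective y) :
    (∑ f ∈ Finset.univ.filter (fun f : Fin N → X => ∀ i, ∃ j, f j = y i),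
        Matrix.det (Matrix.of fun i j => Φ i (f j)) *
        Matrix.det (Matrix.of fun i j => Ψ i (f j))) / Z
    = Matrix.det (Matrix.of fun a b : Fin n =>
        ∑ i : Fin N, ∑ j : Fin N, G⁻¹ j i * Φ i (y a) * Ψ j (y b)) := by
  classical
  set W : (Fin N → X) → ℂ := fun f =>
    (Matrix.of fun i j => Φ i (f j)).det * (Matrix.of fun i j => Ψ i (f j)).det with hW
  set U : Matrix (Fin N) (Fin n) ℂ := Matrix.of fun i a => Φ i (y a) with hU
  set V : Matrix (Fin N) (Fin n) ℂ := Matrix.of fun j a => Ψ j (y a) with hV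
  set D : (Fin n → Bool) → Matrix (Fin n) (Fin n) ℂ :=
    fun t => Matrix.diagonal (fun a => if t a then (1:ℂ) else 0) with hD
  set M : Matrix (Fin n) (Fin n) ℂ := Vᵀ * G⁻¹ * U with hM
  set u : (Fin n → Bool) → X → ℂ :=
    fun t x => ∏ i, (if t i ∧ x = y i then (0:ℂ) else 1) with hu
  -- Z = N! det G
  have hZG : Z = (Nat.factorial N : ℂ) * G.det := by
    rw [hZdef, hGdef]; exact andreief Φ Ψ
  -- pointwise formula for u
  have hupt : ∀ (t : Fin n → Bool) (x : X),
      u t x = 1 - ∑ a, (if t a ∧ x = y a then (1:ℂ) else 0) := by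
    intro t x
    by_cases h : ∃ a, t a ∧ x = y a
    · obtain ⟨a, hta, hxa⟩ := id h
      simp only [hu]
      rw [Finset.prod_eq_zero (Finset.mem_univ a) (by simp [hta, hxa])]
      rw [Finset.sum_eq_single a]
      · simp [hta, hxa]
      · intro b _ hb
        by_cases htb : t b ∧ x = y b
        · exact absurd (hy (htb.2.symm.trans hxa : y b = y a)) hb
        · simp [htb]
      · intro hmem; exact absurd (Finset.mem_univ a) hmem
    · have h1 : ∀ a, ¬ (t a ∧ x = y a) := fun a ha => h ⟨a, ha⟩
      simp only [hu]
      rw [Finset.prod_congr rfl (fun a _ => if_neg (h1 a)),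
        Finset.sum_congr rfl (fun a _ => if_neg (h1 a))]
      simp
  -- Gram matrix with weight u t
  have hGram : ∀ t : Fin n → Bool,
      (Matrix.of fun i j => ∑ x, Φ i x * (Ψ j x * u t x)) = G - U * D t * Vᵀ := by
    intro t
    ext i j
    have hR : (U * D t * Vᵀ) i j = ∑ a, (if t a then Φ i (y a) * Ψ j (y a) else 0) := by
      rw [Matrix.mul_apply]
      refine Finset.sum_congr rfl fun a _ => ?_
      rw [hD, Matrix.mul_diagonal]
      by_cases h : t a <;> simp [h, hU, hV, Matrix.transpose_apply]
    have e : ∀ x, Φ i x * (Ψ j x * u t x)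
        = Φ i x * Ψ j x - ∑ a, (if t a ∧ x = y a then Φ i x * Ψ j x else 0) := by
      intro x
      have hS : ∑ a, (if t a ∧ x = y a then Φ i x * Ψ j x else 0)
          = Φ i x * Ψ j x * ∑ a, (if t a ∧ x = y a then (1:ℂ) else 0) := by
        rw [Finset.mul_sum]
        refine Finset.sum_congr rfl fun a _ => ?_
        by_cases h : t a ∧ x = y a <;> simp [h]
      rw [hS, hupt t x]
      ring
    have hL : ∑ x, Φ i x * (Ψ j x * u t x)
        = G i j - ∑ a, (if t a then Φ i (y a) * Ψ j (y a) else 0) := by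
      rw [Finset.sum_congr rfl (fun x _ => e x), Finset.sum_sub_distrib, Finset.sum_comm]
      congr 1
      · rw [hGdef]; rfl
      · refine Finset.sum_congr rfl fun a _ => ?_
        by_cases h : t a
        · simp only [h, true_and, if_true]
          rw [Finset.sum_ite_eq' Finset.univ (y a) (fun x => Φ i x * Ψ j x)]
          simp
        · simp [h]
    show ∑ x, Φ i x * (Ψ j x * u t x) = (G - U * D t * Vᵀ) i j
    rw [Matrix.sub_apply, hR, hL]
  -- determinant identity
  have hDet : ∀ t : Fin n → Bool,
      (G - U * D t * Vᵀ).det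
        = G.det * ((1 : Matrix (Fin n) (Fin n) ℂ) - M * D t).det := by
    intro t
    have h1 : G - U * D t * Vᵀ = G + (-(U * D t)) * Vᵀ := by
      rw [Matrix.neg_mul, ← sub_eq_add_neg]
    rw [h1, Matrix.det_add_mul _ _ hG]
    congr 2
    rw [Matrix.mul_neg, hM, ← sub_eq_add_neg, Matrix.mul_assoc (Vᵀ * G⁻¹)]
  -- Andréief with weight
  have key : ∀ t : Fin n → Bool,
      ∑ f : Fin N → X, W f * ∏ j, u t (f j)
      = (Nat.factorial N : ℂ)
          * (G.det * ((1 : Matrix (Fin n) (Fin n) ℂ) - M * D t).det) := by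
    intro t
    have hterm : ∀ f : Fin N → X, W f * ∏ j, u t (f j)
        = (Matrix.of fun i j => Φ i (f j)).det *
          (Matrix.of fun i j => Ψ i (f j) * u t (f j)).det := by
      intro f
      have h2 : (Matrix.of fun i j => Ψ i (f j) * u t (f j)).det
          = (∏ j, u t (f j)) * (Matrix.of fun i j => Ψ i (f j)).det := by
        rw [← Matrix.det_mul_row (fun j => u t (f j)) (Matrix.of fun i j => Ψ i (f j))]
        congr 1
        ext i j
        simp [mul_comm]
      rw [h2, hW]; ring
    rw [Finset.sum_congr rfl (fun f _ => hterm f),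
      andreief Φ (fun i x => Ψ i x * u t x), hGram t, hDet t]
  -- main chain for the numerator
  have step1 : (∑ f ∈ Finset.univ.filter (fun f : Fin N → X => ∀ i, ∃ j, f j = y i), W f)
      = ∑ f : Fin N → X, W f * ∏ i, (if ∃ j, f j = y i then (1:ℂ) else 0) := by
    rw [Finset.sum_filter]
    refine Finset.sum_congr rfl fun f _ => ?_
    rw [Finset.prod_boole]
    by_cases h : ∀ i, ∃ j, f j = y i
    · simp [h]
    · have h' : ¬ ∀ i ∈ Finset.univ, ∃ j, f j = y i := by
        intro hc; exact h fun i => hc i (Finset.mem_univ i)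
      simp [h, h']
  have step2 : ∀ f : Fin N → X,
      ∏ i, (if ∃ j, f j = y i then (1:ℂ) else 0)
      = ∑ t : Fin n → Bool, ∏ i,
          (if t i then -∏ j, (if f j = y i then (0:ℂ) else 1) else 1) := by
    intro f
    rw [← Fintype.prod_sum
      (f := fun i (b : Bool) => if b then -∏ j, (if f j = y i then (0:ℂ) else 1) else 1)]
    refine Finset.prod_congr rfl fun i _ => ?_
    rw [Fintype.sum_bool]
    simp only [if_true, if_false]
    by_cases h : ∃ j, f j = y i
    · obtain ⟨j, hj⟩ := id h
      rw [Finset.prod_eq_zero (Finset.mem_univ j) (by simp [hj])]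
      simp [h]
    · have h1 : ∀ j, ¬ (f j = y i) := fun j hj => h ⟨j, hj⟩
      rw [Finset.prod_congr rfl (fun j _ => if_neg (h1 j))]
      simp [h]
  have step3 : ∀ (t : Fin n → Bool) (f : Fin N → X),
      ∏ i, (if t i then -∏ j, (if f j = y i then (0:ℂ) else 1) else 1)
      = (∏ i, (if t i then (-1:ℂ) else 1)) * ∏ j, u t (f j) := by
    intro t f
    have h1 : ∀ i, (if t i then -∏ j, (if f j = y i then (0:ℂ) else 1) else 1)
        = (if t i then (-1:ℂ) else 1) * ∏ j, (if t i ∧ f j = y i then (0:ℂ) else 1) := by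
      intro i
      by_cases h : t i <;> simp [h]
    rw [Finset.prod_congr rfl (fun i _ => h1 i), Finset.prod_mul_distrib]
    congr 1
    rw [Finset.prod_comm]
  have hNm : (∑ f ∈ Finset.univ.filter (fun f : Fin N → X => ∀ i, ∃ j, f j = y i), W f)
      = Z * M.det := by
    rw [step1, Finset.sum_congr rfl (fun f _ => by rw [step2 f, Finset.mul_sum]),
      Finset.sum_comm]
    calc ∑ t : Fin n → Bool, ∑ f : Fin N → X,
          W f * ∏ i, (if t i then -∏ j, (if f j = y i then (0:ℂ) else 1) else 1)
        = ∑ t : Fin n → Bool, (∏ i, (if t i then (-1:ℂ) else 1)) *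
            ((Nat.factorial N : ℂ)
              * (G.det * ((1 : Matrix (Fin n) (Fin n) ℂ) - M * D t).det)) := by
          refine Finset.sum_congr rfl fun t _ => ?_
          rw [← key t, Finset.mul_sum]
          refine Finset.sum_congr rfl fun f _ => ?_
          rw [step3 t f]; ring
      _ = ((Nat.factorial N : ℂ) * G.det) *
            ∑ t : Fin n → Bool, (∏ i, (if t i then (-1:ℂ) else 1)) *
              ((1 : Matrix (Fin n) (Fin n) ℂ) - M * D t).det := by
          rw [Finset.mul_sum]
          refine Finset.sum_congr rfl fun t _ => ?_
          ring
      _ = Z * M.det := by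
          rw [sum_bool_det M, hZG]
  rw [hNm, mul_div_cancel_left₀ _ hZ]
  have hMt : (Matrix.of fun a b : Fin n =>
      ∑ i : Fin N, ∑ j : Fin N, G⁻¹ j i * Φ i (y a) * Ψ j (y b)) = Mᵀ := by
    ext a b
    rw [Matrix.transpose_apply, hM, Matrix.mul_apply]
    simp only [Matrix.of_apply, Matrix.mul_apply, Matrix.transpose_apply, hU, hV,
      Finset.sum_mul]
    refine Finset.sum_congr rfl fun i _ => Finset.sum_congr rfl fun j _ => ?_
    ring
  rw [hMt, Matrix.det_transpose]
end

section
/- (Lindström–Gessel–Viennot) Let G be a finite directed acyclic graph with edge weights w : E → ℂ, and let T(u,v) = Σ_{paths π from u to v} ∏_{e∈π} w(e). Let (u_1,...,u_n) and (v_1,...,v_n) be vertices such that for every non-identity permutation σ, there is no family of pairwise vertex-disjoint paths π_i : u_i → v_{σ(i)}. Then Σ over families of pairwise vertex-disjoint paths π_i : u_i → v_i of ∏_i w(π_i) equals det[T(u_i,v_j)]_{i,j=1}^n. -/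
universe u

open scoped Classical

/-- The weight of a directed path: product of the weights of its edges. -/
def pathWeight {V : Type u} [Quiver.{u+1} V] (w : ∀ {a b : V}, (a ⟶ b) → ℂ) {a : V} :
    ∀ {b : V}, Quiver.Path a b → ℂ
  | _, .nil => 1
  | _, .cons p e => pathWeight w p * w e

/-- The list of vertices visited by a directed path. -/
def pathVerts {V : Type u} [Quiver.{u+1} V] {a : V} : ∀ {b : V}, Quiver.Path a b → List V
  | _, .nil => [a]
  | b, .cons p _ => pathVerts p ++ [b]

/-- `T u v` = total weight of all directed paths from `u` to `v`.  (The graph is a finite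
directed acyclic graph, encoded by requiring the set of paths between any two vertices to be
finite.) -/
noncomputable def totalWeight {V : Type u} [Quiver.{u+1} V] [∀ a b : V, Fintype (Quiver.Path a b)]
    (w : ∀ {a b : V}, (a ⟶ b) → ℂ) (u v : V) : ℂ :=
  ∑ p : Quiver.Path u v, pathWeight w p

/-!
By the Leibniz formula the determinant is a signed sum over pairs `(σ, π)` of a permutation `σ`
and a family of paths `π k : u k ⟶ v (σ k)`. When two paths of the family meet at a vertex `x`,
exchanging their tails after `x` changes `σ` by a transposition and keeps the product of
weights, so the families that are not vertex-disjoint cancel in pairs. For this pairing to be an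
involution, `x` and the two paths must be recovered after the exchange: the exchange preserves
the multiset of all visited vertices and the set of paths through `x`, so `x` and the pair are
chosen from those data only. Since path sets are finite there are no cycles, so every path visits
each vertex once and splits uniquely at it. By hypothesis, the vertex-disjoint families left over
all have `σ = 1`.
-/

@[to_additive]
theorem Fintype.prod_eq_prod_of_pair {ι M : Type*} [Fintype ι] [DecidableEq ι] [CommMonoid M]
    {f g : ι → M} {i j : ι} (hij : i ≠ j) (hpair : f i * f j = g i * g j)
    (hrest : ∀ k, k ≠ i → k ≠ j → f k = g k) : ∏ k, f k = ∏ k, g k := by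
  rw [← Finset.prod_compl_mul_prod {i, j}, ← Finset.prod_compl_mul_prod {i, j} g,
    Finset.prod_pair hij, Finset.prod_pair hij, hpair]
  congr 1
  refine Finset.prod_congr rfl fun k hk => ?_
  simp only [Finset.mem_compl, Finset.mem_insert, Finset.mem_singleton, not_or] at hk
  exact hrest k hk.1 hk.2

namespace Quiver.Path

open Finset

variable {V : Type*} [Quiver V]

section Acyclic

theorem eq_nil_of_finite {a : V} [Finite (Path a a)] (p : Path a a) : p = nil := by
  by_contra hp
  have hlen : p.length ≠ 0 := mt (length_eq_zero_iff p).1 hp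
  let pow : ℕ → Path a a := fun n => (·.comp p)^[n] nil
  have length_pow (n : ℕ) : (pow n).length = n * p.length := by
    induction n with
    | zero => simp [pow]
    | succ n ih => simp [pow, Function.iterate_succ_apply', ← ih, add_mul]
  have : Finite ℕ := Finite.of_injective pow fun m n h => by
    simpa [length_pow, hlen] using congrArg length h
  exact not_finite ℕ

variable [∀ a b : V, Finite (Path a b)]

theorem vertices_nodup {a b : V} (p : Path a b) : p.vertices.Nodup := by
  induction p with
  | nil => simp
  | cons p e ih =>
    refine (List.nodup_concat _ _).2 ⟨fun hc => ?_, ih⟩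
    obtain ⟨-, r, -⟩ := p.exists_eq_comp_of_mem_vertices hc
    exact cons_ne_nil r e (eq_nil_of_finite _)

theorem comp_inj_of_finite {a x b : V} {q q' : Path a x} {r r' : Path x b}
    (h : q.comp r = q'.comp r') : q = q' ∧ r = r' := by
  have hq : (q.comp r).vertices[q.length]'(by simp) = x := by simp
  have hq' : (q.comp r).vertices[q'.length]'(by simp [h]) = x := by simp [h]
  exact (comp_inj' ((vertices_nodup _).getElem_inj_iff.1 (hq.trans hq'.symm))).1 h

end Acyclic

section Graft

/-- The path that follows `p` up to `x` and then `p'` from `x` on (just `p` unless `x` lies on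
both). -/
noncomputable def graft (x : V) {a a' : V} (p : Σ b, Path a b) (p' : Σ b, Path a' b) :
    Σ b, Path a b :=
  if h : x ∈ p.2.vertices ∧ x ∈ p'.2.vertices then
    ⟨p'.1, (p.2.exists_eq_comp_of_mem_vertices h.1).choose.comp
      (p'.2.exists_eq_comp_of_mem_vertices h.2).choose_spec.choose⟩
  else p

theorem graft_of_not_mem {x a a' : V} {p : Σ b, Path a b} {p' : Σ b, Path a' b}
    (h : ¬ (x ∈ p.2.vertices ∧ x ∈ p'.2.vertices)) : graft x p p' = p :=
  dif_neg h

theorem fst_graft {x a a' : V} {p : Σ b, Path a b} {p' : Σ b, Path a' b}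
    (h : x ∈ p.2.vertices ∧ x ∈ p'.2.vertices) : (graft x p p').1 = p'.1 := by
  rw [graft, dif_pos h]

theorem end_mem_vertices_comp {a x b : V} (q : Path a x) (r : Path x b) :
    x ∈ (q.comp r).vertices := by
  simp [start_mem_vertices]

variable [∀ a b : V, Finite (Path a b)]

theorem graft_comp {x a a' b b' : V} (q : Path a x) (r : Path x b) (q' : Path a' x)
    (r' : Path x b') : graft x ⟨b, q.comp r⟩ ⟨b', q'.comp r'⟩ = ⟨b', q.comp r'⟩ := by
  rw [graft, dif_pos ⟨end_mem_vertices_comp q r, end_mem_vertices_comp q' r'⟩]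
  generalize_proofs hs hs'
  rw [(comp_inj_of_finite hs.choose_spec.choose_spec.symm).1,
    (comp_inj_of_finite hs'.choose_spec.choose_spec.symm).2]

theorem graft_self (x : V) {a : V} (p : Σ b, Path a b) : graft x p p = p := by
  by_cases hx : x ∈ p.2.vertices
  · obtain ⟨b, p⟩ := p
    obtain ⟨q, r, rfl⟩ := p.exists_eq_comp_of_mem_vertices hx
    exact graft_comp q r q r
  · exact graft_of_not_mem fun h => hx h.1

theorem graft_graft (x : V) {a a' : V} (p : Σ b, Path a b) (p' : Σ b, Path a' b) :
    graft x (graft x p p') (graft x p' p) = p := by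
  by_cases hx : x ∈ p.2.vertices ∧ x ∈ p'.2.vertices
  · obtain ⟨b, p⟩ := p
    obtain ⟨b', p'⟩ := p'
    obtain ⟨q, r, rfl⟩ := p.exists_eq_comp_of_mem_vertices hx.1
    obtain ⟨q', r', rfl⟩ := p'.exists_eq_comp_of_mem_vertices hx.2
    rw [graft_comp, graft_comp, graft_comp]
  · rw [graft_of_not_mem hx, graft_of_not_mem (hx ∘ And.symm), graft_of_not_mem hx]

theorem mem_vertices_graft {x a a' : V} (p : Σ b, Path a b) (p' : Σ b, Path a' b) :
    x ∈ (graft x p p').2.vertices ↔ x ∈ p.2.vertices := by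
  by_cases hx : x ∈ p.2.vertices ∧ x ∈ p'.2.vertices
  · obtain ⟨b, p⟩ := p
    obtain ⟨b', p'⟩ := p'
    obtain ⟨q, r, rfl⟩ := p.exists_eq_comp_of_mem_vertices hx.1
    obtain ⟨q', r', rfl⟩ := p'.exists_eq_comp_of_mem_vertices hx.2
    rw [graft_comp]
    exact iff_of_true (end_mem_vertices_comp q r') (end_mem_vertices_comp q r)
  · rw [graft_of_not_mem hx]

@[to_additive]
theorem map_graft_mul_map_graft {M : Type*} [CommMonoid M] (f g h : ∀ {a b : V}, Path a b → M)
    (hf : ∀ {a c b : V} (q : Path a c) (r : Path c b), f (q.comp r) = g q * h r)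
    (x : V) {a a' : V} (p : Σ b, Path a b) (p' : Σ b, Path a' b) :
    f (graft x p p').2 * f (graft x p' p).2 = f p.2 * f p'.2 := by
  by_cases hx : x ∈ p.2.vertices ∧ x ∈ p'.2.vertices
  · obtain ⟨b, p⟩ := p
    obtain ⟨b', p'⟩ := p'
    obtain ⟨q, r, rfl⟩ := p.exists_eq_comp_of_mem_vertices hx.1
    obtain ⟨q', r', rfl⟩ := p'.exists_eq_comp_of_mem_vertices hx.2
    rw [graft_comp, graft_comp, hf, hf, hf, hf, mul_mul_mul_comm, mul_comm (h r'),
      ← mul_mul_mul_comm]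
  · rw [graft_of_not_mem hx, graft_of_not_mem (hx ∘ And.symm)]

end Graft

section Reroute

variable {ι : Type*} [Fintype ι] {u : ι → V}

def PairwiseDisjoint (β : ∀ k, Σ b, Path (u k) b) : Prop :=
  Pairwise fun i j => (β i).2.vertices.Disjoint (β j).2.vertices

def vertexMultiset (β : ∀ k, Σ b, Path (u k) b) : Multiset V :=
  ∑ k, ((β k).2.vertices : Multiset V)

variable [∀ a b : V, Finite (Path a b)]

@[to_additive]
theorem prod_map_graft_swap [DecidableEq ι] {M : Type*} [CommMonoid M]
    (f g h : ∀ {a b : V}, Path a b → M)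
    (hf : ∀ {a c b : V} (q : Path a c) (r : Path c b), f (q.comp r) = g q * h r)
    (x : V) (β : ∀ k, Σ b, Path (u k) b) (i j : ι) :
    ∏ k, f (graft x (β k) (β (Equiv.swap i j k))).2 = ∏ k, f (β k).2 := by
  rcases eq_or_ne i j with rfl | hij
  · refine Fintype.prod_congr _ _ fun k => ?_
    rw [Equiv.swap_self, Equiv.refl_apply, graft_self]
  · refine Fintype.prod_eq_prod_of_pair hij ?_ fun k hi hj => ?_
    · rw [Equiv.swap_apply_left, Equiv.swap_apply_right]
      exact map_graft_mul_map_graft f g h hf x _ _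
    · rw [Equiv.swap_apply_of_ne_of_ne hi hj, graft_self]

variable [DecidableEq V] (β : ∀ k, Σ b, Path (u k) b)

theorem count_vertexMultiset (x : V) :
    (vertexMultiset β).count x = #{k | x ∈ (β k).2.vertices} := by
  rw [vertexMultiset, Multiset.count_sum', card_filter]
  refine sum_congr rfl fun k _ => ?_
  rw [Multiset.count_eq_of_nodup (Multiset.coe_nodup.2 (vertices_nodup _))]
  simp only [Multiset.mem_coe]

theorem not_pairwiseDisjoint_iff :
    ¬ PairwiseDisjoint β ↔ ∃ x, 1 < (vertexMultiset β).count x := by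
  simp only [PairwiseDisjoint, Pairwise, List.Disjoint, count_vertexMultiset, one_lt_card,
    mem_filter, mem_univ, true_and]
  grind

variable (h : ¬ PairwiseDisjoint β)

/-- Depends on `β` only through `vertexMultiset β`, which rerouting preserves. -/
noncomputable def crossVertex : V :=
  ((not_pairwiseDisjoint_iff β).1 h).choose

theorem exists_pair_crossVertex : ∃ p : ι × ι, p.1 ≠ p.2 ∧
    crossVertex β h ∈ (β p.1).2.vertices ∧ crossVertex β h ∈ (β p.2).2.vertices := by
  have hx := ((not_pairwiseDisjoint_iff β).1 h).choose_spec
  rw [count_vertexMultiset, one_lt_card] at hx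
  obtain ⟨i, hi, j, hj, hij⟩ := hx
  exact ⟨(i, j), hij, (mem_filter.1 hi).2, (mem_filter.1 hj).2⟩

variable [DecidableEq ι]

noncomputable def crossSwap : Equiv.Perm ι :=
  Equiv.swap (exists_pair_crossVertex β h).choose.1 (exists_pair_crossVertex β h).choose.2

noncomputable def reroute : ∀ k, Σ b, Path (u k) b :=
  fun k => graft (crossVertex β h) (β k) (β (crossSwap β h k))

theorem sign_crossSwap : Equiv.Perm.sign (crossSwap β h) = -1 :=
  Equiv.Perm.sign_swap (exists_pair_crossVertex β h).choose_spec.1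

theorem crossSwap_mul_self : crossSwap β h * crossSwap β h = 1 :=
  Equiv.swap_mul_self _ _

theorem crossSwap_apply_eq_self_or (k : ι) :
    crossSwap β h k = k ∨ crossVertex β h ∈ (β k).2.vertices ∧
      crossVertex β h ∈ (β (crossSwap β h k)).2.vertices := by
  obtain ⟨-, hi, hj⟩ := (exists_pair_crossVertex β h).choose_spec
  unfold crossSwap
  generalize (exists_pair_crossVertex β h).choose = p at hi hj
  obtain ⟨i, j⟩ := p
  by_cases hki : k = i
  · subst hki
    rw [Equiv.swap_apply_left]
    exact .inr ⟨hi, hj⟩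
  by_cases hkj : k = j
  · subst hkj
    rw [Equiv.swap_apply_right]
    exact .inr ⟨hj, hi⟩
  exact .inl (Equiv.swap_apply_of_ne_of_ne hki hkj)

theorem fst_reroute (k : ι) : (reroute β h k).1 = (β (crossSwap β h k)).1 := by
  rcases crossSwap_apply_eq_self_or β h k with hk | hk
  · rw [reroute, hk, graft_self]
  · exact fst_graft hk

theorem vertexMultiset_reroute : vertexMultiset (reroute β h) = vertexMultiset β := by
  unfold vertexMultiset reroute crossSwap
  exact sum_map_graft_swap (fun p => (p.vertices : Multiset V))
    (fun p => (p.vertices.dropLast : Multiset V)) (fun p => (p.vertices : Multiset V))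
    (fun q r => by simp [vertices_comp]) _ β _ _

theorem prod_weight_reroute {R : Type*} [CommMonoid R] (w : ∀ {a b : V}, (a ⟶ b) → R) :
    ∏ k, (reroute β h k).2.weight w = ∏ k, (β k).2.weight w :=
  prod_map_graft_swap (weight w) (weight w) (weight w) (weight_comp w) _ β _ _

theorem not_pairwiseDisjoint_reroute : ¬ PairwiseDisjoint (reroute β h) := by
  rw [not_pairwiseDisjoint_iff, vertexMultiset_reroute, ← not_pairwiseDisjoint_iff]
  exact h

theorem crossVertex_reroute (h' : ¬ PairwiseDisjoint (reroute β h)) :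
    crossVertex (reroute β h) h' = crossVertex β h := by
  unfold crossVertex
  congr 1
  rw [vertexMultiset_reroute]

theorem crossSwap_reroute (h' : ¬ PairwiseDisjoint (reroute β h)) :
    crossSwap (reroute β h) h' = crossSwap β h := by
  have hpair : (exists_pair_crossVertex (reroute β h) h').choose =
      (exists_pair_crossVertex β h).choose := by
    congr 1
    funext p
    rw [crossVertex_reroute, reroute, reroute, mem_vertices_graft, mem_vertices_graft]
  rw [crossSwap, crossSwap, hpair]

theorem reroute_reroute (h' : ¬ PairwiseDisjoint (reroute β h)) :
    reroute (reroute β h) h' = β := by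
  funext k
  rw [reroute, crossVertex_reroute, crossSwap_reroute, reroute, reroute, crossSwap,
    Equiv.swap_apply_self, graft_graft]

end Reroute

section SignedFamily

variable {ι : Type*} {u v : ι → V}

def bundle {c : ι → V} (π : ∀ k, Path (u k) (c k)) : ∀ k, Σ b, Path (u k) b :=
  fun k => ⟨c k, π k⟩

theorem sigma_ext_of_bundle {a b : Σ σ : Equiv.Perm ι, ∀ k, Path (u k) (v (σ k))}
    (h₁ : a.1 = b.1) (h₂ : bundle a.2 = bundle b.2) : a = b := by
  obtain ⟨σ, π⟩ := a
  obtain ⟨τ, π'⟩ := b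
  obtain rfl : σ = τ := h₁
  congr
  funext k
  exact eq_of_heq (Sigma.mk.inj (congrFun h₂ k)).2

variable [Fintype ι] [DecidableEq ι] [∀ a b : V, Fintype (Path a b)] [DecidableEq V]

noncomputable def rerouteFamily (a : Σ σ : Equiv.Perm ι, ∀ k, Path (u k) (v (σ k)))
    (h : ¬ PairwiseDisjoint (bundle a.2)) : Σ σ : Equiv.Perm ι, ∀ k, Path (u k) (v (σ k)) :=
  ⟨a.1 * crossSwap _ h, fun k => (reroute _ h k).2.cast rfl (fst_reroute _ h k)⟩

theorem bundle_rerouteFamily (a : Σ σ : Equiv.Perm ι, ∀ k, Path (u k) (v (σ k)))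
    (h : ¬ PairwiseDisjoint (bundle a.2)) :
    bundle (rerouteFamily a h).2 = reroute (bundle a.2) h := by
  funext k
  exact Sigma.ext (fst_reroute _ h k).symm (Quiver.Path.cast_heq rfl _ (reroute _ h k).2)

variable (a : Σ σ : Equiv.Perm ι, ∀ k, Path (u k) (v (σ k)))
  (h : ¬ PairwiseDisjoint (bundle a.2))

theorem sign_rerouteFamily :
    Equiv.Perm.sign (rerouteFamily a h).1 = -Equiv.Perm.sign a.1 := by
  rw [rerouteFamily, Equiv.Perm.sign_mul, sign_crossSwap, mul_neg_one]

theorem prod_weight_rerouteFamily {R : Type*} [CommMonoid R] (w : ∀ {a b : V}, (a ⟶ b) → R) :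
    ∏ k, ((rerouteFamily a h).2 k).weight w = ∏ k, (a.2 k).weight w := by
  change ∏ k, (bundle (rerouteFamily a h).2 k).2.weight w = ∏ k, (bundle a.2 k).2.weight w
  rw [bundle_rerouteFamily, prod_weight_reroute]

theorem rerouteFamily_ne : rerouteFamily a h ≠ a := fun hfix => by
  have hτ : crossSwap _ h = 1 := mul_eq_left.1 (congrArg Sigma.fst hfix)
  have hsign := sign_crossSwap _ h
  rw [hτ, Equiv.Perm.sign_one] at hsign
  exact absurd hsign (by decide)

theorem not_pairwiseDisjoint_rerouteFamily :
    ¬ PairwiseDisjoint (bundle (rerouteFamily a h).2) := by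
  rw [bundle_rerouteFamily]
  exact not_pairwiseDisjoint_reroute _ _

theorem rerouteFamily_rerouteFamily (h' : ¬ PairwiseDisjoint (bundle (rerouteFamily a h).2)) :
    rerouteFamily (rerouteFamily a h) h' = a := by
  -- `h'` is about `bundle (rerouteFamily a h).2`, so that term is generalized before rewriting
  have key : ∀ β, β = reroute (bundle a.2) h → ∀ h'' : ¬ PairwiseDisjoint β,
      crossSwap β h'' = crossSwap _ h ∧ reroute β h'' = bundle a.2 := by
    rintro _ rfl h''
    exact ⟨crossSwap_reroute _ _ h'', reroute_reroute _ _ h''⟩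
  obtain ⟨hτ, hβ⟩ := key _ (bundle_rerouteFamily a h) h'
  refine sigma_ext_of_bundle ?_ ?_
  · show a.1 * crossSwap _ h * crossSwap _ h' = a.1
    rw [hτ, mul_assoc, crossSwap_mul_self, mul_one]
  · rw [bundle_rerouteFamily, hβ]

theorem sum_not_pairwiseDisjoint_eq_zero {R : Type*} [CommRing R]
    (w : ∀ {a b : V}, (a ⟶ b) → R) :
    ∑ a ∈ univ.filter fun a : Σ σ : Equiv.Perm ι, ∀ k, Path (u k) (v (σ k)) =>
        ¬ PairwiseDisjoint (bundle a.2),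
      (Equiv.Perm.sign a.1 : R) * ∏ k, (a.2 k).weight w = 0 := by
  refine sum_involution (fun a ha => rerouteFamily a (mem_filter.1 ha).2) (fun a ha => ?_)
    (fun a _ _ => rerouteFamily_ne a _)
    (fun a _ => mem_filter.2 ⟨mem_univ _, not_pairwiseDisjoint_rerouteFamily a _⟩)
    (fun a _ => rerouteFamily_rerouteFamily a _ _)
  rw [sign_rerouteFamily, prod_weight_rerouteFamily]
  push_cast
  ring

end SignedFamily

end Quiver.Path

open Quiver Quiver.Path Finset

theorem pathWeight_eq_weight {V : Type u} [Quiver.{u+1} V] (w : ∀ {a b : V}, (a ⟶ b) → ℂ)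
    {a b : V} (p : Path a b) : pathWeight w p = p.weight w := by
  induction p with
  | nil => rw [pathWeight, weight_nil]
  | cons p e ih => rw [pathWeight, ih, weight_cons]

theorem pathVerts_eq_vertices {V : Type u} [Quiver.{u+1} V] {a b : V} (p : Path a b) :
    pathVerts p = p.vertices := by
  induction p with
  | nil => rfl
  | cons p e ih => rw [pathVerts, ih, vertices_cons, List.concat_eq_append]

theorem det_totalWeight_eq_sum {V : Type u} [Quiver.{u+1} V] [∀ a b : V, Fintype (Path a b)]
    {ι : Type*} [Fintype ι] [DecidableEq ι] (w : ∀ {a b : V}, (a ⟶ b) → ℂ)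
    (u v : ι → V) :
    (Matrix.of fun i j => totalWeight w (u i) (v j)).det =
      ∑ a : Σ σ : Equiv.Perm ι, ∀ k, Path (u k) (v (σ k)),
        (Equiv.Perm.sign a.1 : ℂ) * ∏ k, (a.2 k).weight w := by
  rw [← Matrix.det_transpose, Matrix.det_apply', Fintype.sum_sigma]
  refine Fintype.sum_congr _ _ fun σ => ?_
  simp only [Matrix.transpose_apply, Matrix.of_apply, totalWeight, pathWeight_eq_weight,
    Fintype.prod_sum, mul_sum]

/-- Lindström–Gessel–Viennot: if for every non-identity permutation σ there is no
family of pairwise vertex-disjoint paths `u i → v (σ i)`, then the total weight of families of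
pairwise vertex-disjoint paths `u i → v i` equals `det[T(u_i, v_j)]`. -/
theorem lindstrom_gessel_viennot {V : Type u} [Quiver.{u+1} V] [∀ a b : V, Fintype (Quiver.Path a b)]
    (w : ∀ {a b : V}, (a ⟶ b) → ℂ) (n : ℕ) (u v : Fin n → V)
    (hσ : ∀ σ : Equiv.Perm (Fin n), σ ≠ 1 →
      ¬ ∃ π : ∀ i, Quiver.Path (u i) (v (σ i)),
          Pairwise fun i j => List.Disjoint (pathVerts (π i)) (pathVerts (π j))) :
    (∑ π : ∀ i, Quiver.Path (u i) (v i),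
        if Pairwise (fun i j => List.Disjoint (pathVerts (π i)) (pathVerts (π j)))
        then ∏ i, pathWeight w (π i) else 0)
    = Matrix.det (Matrix.of fun i j => totalWeight w (u i) (v j)) := by
  simp only [pathVerts_eq_vertices, pathWeight_eq_weight] at hσ ⊢
  rw [det_totalWeight_eq_sum, ← sum_filter_add_sum_filter_not univ
      fun a : Σ σ : Equiv.Perm (Fin n), ∀ k, Path (u k) (v (σ k)) =>
        PairwiseDisjoint (bundle a.2),
    sum_not_pairwiseDisjoint_eq_zero, add_zero, sum_filter, Fintype.sum_sigma,
    Fintype.sum_eq_single (1 : Equiv.Perm (Fin n))]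
  · simp only [Equiv.Perm.sign_one, Units.val_one, Int.cast_one, one_mul]
    rfl
  · exact fun σ hσ1 => sum_eq_zero fun π _ => if_neg fun hπ => hσ σ hσ1 ⟨π, hπ⟩
end

section
/- (Macchi) Let X be a finite set and L an X × X matrix with det(1+L) ≠ 0, defining the L-ensemble Pr{Y} = det L_Y / det(1+L) on subsets Y ⊆ X. Then for every subset A = {a_1,...,a_n} ⊆ X, the correlation function ρ(A) = Σ_{Y ⊇ A} Pr{Y} equals det[K(a_i,a_j)]_{i,j=1}^n where K = L(1+L)^{-1}. -/
/-!
Let `D` be the diagonal matrix with entries `1` off `A` and `0` on `A`. Expanding `det (D + L)`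
by multilinearity in the rows gives `∑_{Y ⊇ A} det L_Y`. On the other hand `K (1 + L) = L`, so
`D + L = P (1 + L)` where `P` has the rows of `K` on `A` and identity rows elsewhere; hence
`det (D + L) = det (1 + L) · det K_A`.
-/

/-- Principal minor of `L` on the rows and columns indexed by the subset `S`. -/
noncomputable def minorDet {X : Type*} [Fintype X] [DecidableEq X]
    (L : Matrix X X ℂ) (S : Finset X) : ℂ :=
  Matrix.det (Matrix.of fun i j : S => L i j)

open Finset Matrix

namespace Matrix

variable {X R : Type*} [DecidableEq X] [CommRing R]

theorem det_submatrix_image {ι : Type*} [Fintype ι] [DecidableEq ι] (M : Matrix X X R)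
    {a : ι → X} (ha : a.Injective) :
    det (M.submatrix ((↑) : univ.image a → X) (↑)) = det (M.submatrix a a) := by
  let e : ι ≃ univ.image a :=
    (Equiv.ofInjective a ha).trans (Equiv.subtypeEquivRight fun x => by simp)
  rw [← det_submatrix_equiv_self e]
  rfl

variable [Fintype X]

theorem det_diagonal_add (d : X → R) (M : Matrix X X R) :
    det (diagonal d + M) =
      ∑ S : Finset X, (∏ i ∈ Sᶜ, d i) * det (M.submatrix ((↑) : S → X) (↑)) := by
  have hrows : diagonal d + M = (fun i => d i • (1 : Matrix X X R) i) + fun i => M i := by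
    ext i j
    by_cases h : i = j <;> simp [diagonal, h]
  have hpiece (s : Finset X) :
      s.piecewise (fun i => d i • (1 : Matrix X X R) i) (fun i => M i) =
        fun i => (if i ∈ s then d i else 1) • sᶜ.piecewise M.row (1 : Matrix X X R).row i := by
    ext i j
    by_cases h : i ∈ s <;> simp [h, Finset.piecewise]
  rw [det, hrows, AlternatingMap.map_add_univ]
  simp_rw [hpiece, AlternatingMap.map_smul_univ, prod_ite_mem, univ_inter, smul_eq_mul]
  refine Fintype.sum_bijective (·ᶜ) compl_involutive.bijective _ _ fun s => ?_
  rw [compl_compl, ← det_piecewise_one_eq_submatrix_det]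
  rfl

theorem sum_superset_det_submatrix (A : Finset X) (M : Matrix X X R) :
    ∑ S ∈ univ.filter (A ⊆ ·), det (M.submatrix ((↑) : S → X) (↑)) =
      det (diagonal (fun i => if i ∈ A then 0 else 1) + M) := by
  rw [det_diagonal_add, sum_filter]
  refine Fintype.sum_congr _ _ fun S => ?_
  by_cases h : A ⊆ S
  · rw [if_pos h, prod_eq_one fun i hi => if_neg fun hA => mem_compl.mp hi (h hA), one_mul]
  · obtain ⟨i, hiA, hiS⟩ := not_subset.mp h
    rw [if_neg h, prod_eq_zero (mem_compl.mpr hiS) (by rw [if_pos hiA]), zero_mul]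

theorem det_diagonal_add_eq_det_one_add_mul (L : Matrix X X R) (hL : IsUnit (1 + L).det)
    (A : Finset X) :
    det (diagonal (fun i => if i ∈ A then 0 else 1) + L) =
      det (1 + L) * det ((L * (1 + L)⁻¹).submatrix ((↑) : A → X) (↑)) := by
  set K := L * (1 + L)⁻¹
  have hK : K * (1 + L) = L := by rw [Matrix.mul_assoc, nonsing_inv_mul _ hL, Matrix.mul_one]
  have hfactor : diagonal (fun i => if i ∈ A then 0 else 1) + L =
      of (A.piecewise K.row (1 : Matrix X X R).row) * (1 + L) := by
    funext i
    rw [mul_apply_eq_vecMul]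
    change _ = A.piecewise K.row (1 : Matrix X X R).row i ᵥ* (1 + L)
    by_cases hi : i ∈ A
    · rw [piecewise_eq_of_mem _ _ _ hi, row_def, ← mul_apply_eq_vecMul, hK]
      ext j
      simp [diagonal_apply, hi]
    · rw [piecewise_eq_of_notMem _ _ _ hi, row_def, ← mul_apply_eq_vecMul, Matrix.one_mul]
      ext j
      by_cases hij : i = j
      · subst hij
        simp [hi]
      · simp [hij]
  rw [hfactor, det_mul, det_piecewise_one_eq_submatrix_det, mul_comm]

end Matrix

/-- Macchi: the L-ensemble `Pr{Y} = det L_Y / det(1+L)` is a determinantal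
point process with correlation kernel `K = L(1+L)⁻¹`: for any distinct points
`a 1, …, a n`, the correlation function `∑_{Y ⊇ {a i}} Pr{Y}` equals `det[K(a_i,a_j)]`. -/
theorem L_ensemble_determinantal {X : Type*} [Fintype X] [DecidableEq X] (L : Matrix X X ℂ)
    (hdet : Matrix.det (1 + L) ≠ 0)
    (n : ℕ) (a : Fin n → X) (ha : Function.Injective a) :
    (∑ S ∈ Finset.univ.filter (fun S : Finset X => ∀ i, a i ∈ S), minorDet L S)
        / Matrix.det (1 + L)
    = Matrix.det (Matrix.of fun i j : Fin n => (L * (1 + L)⁻¹) (a i) (a j)) := by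
  have hfilter : univ.filter (fun S : Finset X => ∀ i, a i ∈ S) =
      univ.filter (univ.image a ⊆ ·) := by
    ext S
    simp [image_subset_iff]
  have hsum : ∑ S ∈ univ.filter (fun S : Finset X => ∀ i, a i ∈ S), minorDet L S =
      det (diagonal (fun i => if i ∈ univ.image a then 0 else 1) + L) := by
    rw [hfilter]
    exact sum_superset_det_submatrix _ L
  rw [hsum, det_diagonal_add_eq_det_one_add_mul L (isUnit_iff_ne_zero.mpr hdet),
    mul_div_cancel_left₀ _ hdet, det_submatrix_image _ ha]
  rfl
end

section
/- Let X be a finite set, Y ⊆ X nonempty with complement Ȳ, and L an X × X matrix with det(1_Y + L) ≠ 0 where 1_Y is the block identity on Y (zero on Ȳ). Define the conditional L-ensemble on subsets Z ⊆ Y by Pr{Z} = det L_{Z ∪ Ȳ} / det(1_Y + L). Then this process is determinantal on Y with correlation kernel K = 1_Y − (1_Y + L)^{-1} restricted to Y × Y: for all distinct a_1,...,a_n ∈ Y, Σ_{Z ⊇ {a_1,...,a_n}} Pr{Z} = det[K(a_i,a_j)]_{i,j=1}^n. -/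
open Finset Matrix Equiv

theorem submatrix_eq_submatrix_one_mul_mul {X ι R : Type*} [Fintype X] [DecidableEq X]
    [NonAssocSemiring R] (N : Matrix X X R) (a : ι → X) :
    N.submatrix a a
      = (1 : Matrix X X R).submatrix a id * N * (1 : Matrix X X R).submatrix id a := by
  ext i j
  simp [mul_apply, one_apply]

theorem submatrix_one_mul_submatrix_one {X ι R : Type*} [DecidableEq X] [Fintype ι]
    [NonAssocSemiring R] {a : ι → X} (ha : Function.Injective a) :
    (1 : Matrix X X R).submatrix id a * (1 : Matrix X X R).submatrix a id
      = diagonal fun x => if x ∈ univ.image a then 1 else 0 := by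
  ext x y
  simp only [mul_apply, submatrix_apply, id, one_apply, diagonal_apply]
  by_cases hx : x ∈ univ.image a
  · obtain ⟨i, -, rfl⟩ := mem_image.1 hx
    rw [sum_eq_single i (fun j _ hji => by simp [(ha.ne hji).symm]) (by simp), if_pos hx]
    simp
  · rw [if_neg hx, ite_self]
    refine sum_eq_zero fun i _ => ?_
    rw [if_neg (by rintro rfl; simp at hx), zero_mul]

theorem det_mul_det_one_sub_submatrix_inv {X ι R : Type*} [Fintype X] [DecidableEq X] [Fintype ι]
    [DecidableEq ι] [CommRing R] {M : Matrix X X R} (hM : IsUnit M.det) {a : ι → X}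
    (ha : Function.Injective a) :
    M.det * (1 - M⁻¹.submatrix a a).det
      = (M - diagonal fun x => if x ∈ univ.image a then 1 else 0).det := by
  rw [submatrix_eq_submatrix_one_mul_mul, Matrix.mul_assoc, det_one_sub_mul_comm, Matrix.mul_assoc,
    submatrix_one_mul_submatrix_one ha, ← det_mul, Matrix.mul_sub, Matrix.mul_one,
    ← Matrix.mul_assoc, mul_nonsing_inv _ hM, Matrix.one_mul]

section

variable {X : Type*} [Fintype X] [DecidableEq X]

theorem minorDet_eq_sum_perm (L : Matrix X X ℂ) (S : Finset X) :
    minorDet L S = ∑ σ : Perm X with ∀ x ∉ S, σ x = x,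
      ((Perm.sign σ : ℤ) : ℂ) * ∏ x ∈ S, L (σ x) x := by
  rw [sum_subtype _ (p := fun σ : Perm X => ∀ x ∉ S, σ x = x) (by simp), minorDet, det_apply',
    ← (Perm.subtypeEquivSubtypePerm (· ∈ S)).sum_comp]
  refine Fintype.sum_congr _ _ fun τ => ?_
  rw [Perm.subtypeEquivSubtypePerm_apply_coe, Perm.sign_ofSubtype, ← prod_coe_sort S]
  simp [Perm.ofSubtype_apply_coe]

theorem prod_diagonal_indicator_add_apply (L : Matrix X X ℂ) (S : Finset X) (σ : Perm X) :
    ∏ x, ((diagonal fun x => if x ∈ S then (1 : ℂ) else 0) + L) (σ x) x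
      = ∑ T ∈ S.powerset,
          (if ∀ x ∈ T, σ x = x then 1 else 0) * ∏ x ∈ Tᶜ, L (σ x) x := by
  set D : Matrix X X ℂ := diagonal fun x => if x ∈ S then 1 else 0
  have hS : ∀ x ∈ S, (D + L) (σ x) x = (if σ x = x then 1 else 0) + L (σ x) x :=
    fun x hx => by
      by_cases h : σ x = x <;> simp [D, h, hx]
  have hSc : ∀ x ∈ Sᶜ, (D + L) (σ x) x = L (σ x) x := fun x hx => by
    by_cases h : σ x = x <;> simp_all [D, diagonal_apply]
  rw [← prod_mul_prod_compl S, prod_congr rfl hS, prod_congr rfl hSc, prod_add, sum_mul]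
  refine sum_congr rfl fun T hT => ?_
  rw [prod_boole, mul_assoc, ← prod_union (disjoint_compl_right.mono_left sdiff_subset)]
  congr 2
  ext x
  have hTx := @mem_powerset.1 hT x
  simp only [mem_union, mem_sdiff, mem_compl]
  tauto

theorem det_diagonal_indicator_add_eq_sum_minorDet (L : Matrix X X ℂ) (S : Finset X) :
    ((diagonal fun x => if x ∈ S then (1 : ℂ) else 0) + L).det
      = ∑ T ∈ S.powerset, minorDet L Tᶜ := by
  simp_rw [det_apply', prod_diagonal_indicator_add_apply, mul_sum, minorDet_eq_sum_perm,
    mem_compl, not_not, sum_filter]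
  rw [sum_comm]
  simp [mul_comm]

theorem sum_minorDet_union_compl_eq_det (L : Matrix X X ℂ) {A Y : Finset X} (hAY : A ⊆ Y) :
    ∑ Z with Z ⊆ Y ∧ A ⊆ Z, minorDet L (Z ∪ Yᶜ)
      = ((diagonal fun x => if x ∈ Y \ A then (1 : ℂ) else 0) + L).det := by
  rw [det_diagonal_indicator_add_eq_sum_minorDet]
  refine sum_bij' (fun Z _ => Y \ Z) (fun T _ => Y \ T) ?_ ?_ ?_ ?_ ?_
  · intro Z hZ
    simp only [mem_filter, mem_univ, true_and] at hZ
    exact mem_powerset.2 (sdiff_subset_sdiff subset_rfl hZ.2)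
  · intro T hT
    have hTYA := mem_powerset.1 hT
    simp only [mem_filter, mem_univ, true_and]
    refine ⟨sdiff_subset, fun x hx => mem_sdiff.2 ⟨hAY hx, fun hxT => ?_⟩⟩
    exact (mem_sdiff.1 (hTYA hxT)).2 hx
  · intro Z hZ
    exact Finset.sdiff_sdiff_eq_self (mem_filter.1 hZ).2.1
  · intro T hT
    exact Finset.sdiff_sdiff_eq_self ((mem_powerset.1 hT).trans sdiff_subset)
  · intro Z _
    congr 1
    ext x
    simp only [mem_union, mem_compl, mem_sdiff]
    tauto

end

theorem conditional_L_ensemble_determinantal_general {X : Type*} [Fintype X] [DecidableEq X]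
    (Y : Finset X) (L : Matrix X X ℂ)
    (E : Matrix X X ℂ) (hE : E = Matrix.diagonal fun x => if x ∈ Y then (1 : ℂ) else 0)
    (hdet : Matrix.det (E + L) ≠ 0)
    (n : ℕ) (a : Fin n → X) (ha : Function.Injective a) (haY : ∀ i, a i ∈ Y) :
    (∑ Z ∈ Finset.univ.filter (fun Z : Finset X => Z ⊆ Y ∧ ∀ i, a i ∈ Z),
        minorDet L (Z ∪ Yᶜ)) / Matrix.det (E + L)
    = Matrix.det (Matrix.of fun i j : Fin n => (E - (E + L)⁻¹) (a i) (a j)) := by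
  have hAY : univ.image a ⊆ Y := by simpa [image_subset_iff] using haY
  have hfilter : (univ.filter fun Z : Finset X => Z ⊆ Y ∧ ∀ i, a i ∈ Z)
      = univ.filter fun Z => Z ⊆ Y ∧ univ.image a ⊆ Z := by
    simp [image_subset_iff]
  have hkernel : (Matrix.of fun i j : Fin n => (E - (E + L)⁻¹) (a i) (a j))
      = 1 - (E + L)⁻¹.submatrix a a := by
    ext i j
    simp [hE, one_apply, diagonal_apply, ha.eq_iff, haY]
  have hshift : E + L - (diagonal fun x => if x ∈ univ.image a then 1 else 0)
      = (diagonal fun x => if x ∈ Y \ univ.image a then 1 else 0) + L := by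
    rw [add_sub_right_comm, hE, diagonal_sub]
    congr 2 with x
    by_cases hx : x ∈ univ.image a
    · simp [hx, hAY hx]
    · simp [hx]
  rw [div_eq_iff hdet, hfilter, sum_minorDet_union_compl_eq_det L hAY, hkernel, ← hshift,
    ← det_mul_det_one_sub_submatrix_inv (isUnit_iff_ne_zero.2 hdet) ha, mul_comm]

/-- conditional L-ensembles: let `Y ⊆ X` be nonempty, `1_Y` the block identity
supported on `Y`, and suppose `det(1_Y + L) ≠ 0`.  The conditional L-ensemble
`Pr{Z} = det L_{Z ∪ Ȳ} / det(1_Y + L)` (for `Z ⊆ Y`) is determinantal on `Y` with kernel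
`K = 1_Y − (1_Y + L)⁻¹` restricted to `Y × Y`. -/
theorem conditional_L_ensemble_determinantal {X : Type*} [Fintype X] [DecidableEq X]
    (Y : Finset X) (hY : Y.Nonempty) (L : Matrix X X ℂ)
    (E : Matrix X X ℂ) (hE : E = Matrix.diagonal fun x => if x ∈ Y then (1 : ℂ) else 0)
    (hdet : Matrix.det (E + L) ≠ 0)
    (n : ℕ) (a : Fin n → X) (ha : Function.Injective a) (haY : ∀ i, a i ∈ Y) :
    (∑ Z ∈ Finset.univ.filter (fun Z : Finset X => Z ⊆ Y ∧ ∀ i, a i ∈ Z),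
        minorDet L (Z ∪ Yᶜ)) / Matrix.det (E + L)
    = Matrix.det (Matrix.of fun i j : Fin n => (E - (E + L)⁻¹) (a i) (a j)) :=
  conditional_L_ensemble_determinantal_general Y L E hE hdet n a ha haY
end

section
/- Let a point process on a finite interval of ℤ be one-dependent: for all finite A, B with dist(A,B) ≥ 2, ρ_{|A|+|B|}(A ∪ B) = ρ_{|A|}(A)·ρ_{|B|}(B). Then the process is determinantal with kernel K(x,y) = 0 for x − y ≥ 2; K(x,y) = −1 for x − y = 1; and K(x,y) = Σ_{r=1}^{y−x+1} (−1)^{r−1} Σ_{x=l_0<l_1<...<l_r=y+1} R_{l_0,l_1}...R_{l_{r−1},l_r} for x ≤ y, where R_{a,b} = ρ_{b−a}(a, a+1, ..., b−1). -/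
/-!
Write `ρ[a, b]` for `ρ (Icc a b)`. The kernel is upper Hessenberg: `K(x, y) = 0` for `x - y ≥ 2`
and `K(y + 1, y) = -1`. Splitting off the first link of a chain gives the recursion
`∑_{m=x}^{y} ρ[x, m-1] K(m, y) = ρ[x, y]` (using `ρ ∅ = 1`), so on an interval `[x, x+n]` replacing
the first row of the kernel matrix by `∑_t ρ[x, x+t-1] • row_t` leaves `(0, …, 0, ρ[x, x+n])`,
and the complementary minor is triangular with diagonal `-1`. A finite set with a gap `g ∈ S`,
`g + 1 ∉ S`, splits at `g` into two parts at distance at least `2`: across the gap the kernel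
matrix is block triangular and one-dependence factorises `ρ`, so induction on `S` finishes.
-/

open scoped Classical

/-- The kernel of Theorem `rdet`:
`K(x,y) = 0` for `x − y ≥ 2`, `K(x,y) = −1` for `x − y = 1`, and for `x ≤ y`
`K(x,y) = ∑_{r=1}^{y−x+1} (−1)^{r−1} ∑_{x = l₀ < l₁ < ⋯ < l_r = y+1} R_{l₀,l₁}⋯R_{l_{r−1},l_r}`,
where `R_{a,b} = ρ_{b−a}(a, a+1, …, b−1) = ρ (Finset.Icc a (b−1))`.
(Here the summation index `r` below runs over `0, …, (y−x+1).toNat − 1` and corresponds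
to `r+1` in the formula above, so the sign is `(−1)^r` and a chain is a strictly increasing
function `l : Fin (r+2) → ℤ` with `l 0 = x` and `l (last) = y+1`.) -/
noncomputable def oneDepKernel (ρ : Finset ℤ → ℝ) (x y : ℤ) : ℝ :=
  if 2 ≤ x - y then 0
  else if x - y = 1 then -1
  else ∑ r ∈ Finset.range (y - x + 1).toNat,
    (-1 : ℝ) ^ r *
      ∑ l ∈ (Fintype.piFinset fun _ : Fin (r + 2) => Finset.Icc x (y + 1)).filter
          (fun l => StrictMono l ∧ l 0 = x ∧ l (Fin.last (r + 1)) = y + 1),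
        ∏ i : Fin (r + 1), ρ (Finset.Icc (l i.castSucc) (l i.succ - 1))

open Finset

section PrincipalMinor

variable {α R : Type*} [DecidableEq α] [CommRing R]

noncomputable def principalMinor (K : α → α → R) (S : Finset α) : R :=
  (Matrix.of fun s t : S => K s t).det

theorem principalMinor_image {ι : Type*} [Fintype ι] [DecidableEq ι] (K : α → α → R)
    (a : ι → α) (ha : Function.Injective a) :
    principalMinor K (univ.image a) = (Matrix.of fun i j => K (a i) (a j)).det := by
  let e : ι ≃ univ.image a :=
    Equiv.ofBijective (fun i => ⟨a i, mem_image_of_mem a (mem_univ i)⟩)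
      ⟨fun i j h => ha (congrArg Subtype.val h), fun ⟨s, hs⟩ => by
        obtain ⟨i, -, rfl⟩ := mem_image.1 hs
        exact ⟨i, rfl⟩⟩
  exact (Matrix.det_submatrix_equiv_self e _).symm

theorem principalMinor_eq_mul_filter (K : α → α → R) (S : Finset α) (p : α → Prop)
    [DecidablePred p] (h : ∀ i ∈ S, ∀ j ∈ S, ¬p i → p j → K i j = 0) :
    principalMinor K S = principalMinor K (S.filter p) * principalMinor K (S.filter (¬p ·)) := by
  set M := Matrix.of fun s t : S => K s t
  have block (q : α → Prop) [DecidablePred q] :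
      (M.toSquareBlockProp fun s => q s).det = principalMinor K (S.filter q) :=
    Matrix.det_submatrix_equiv_self ((Equiv.subtypeSubtypeEquivSubtypeInter (· ∈ S) q).trans
      (Equiv.subtypeEquivRight fun _ => mem_filter.symm)) (Matrix.of fun s t : S.filter q => K s t)
  rw [principalMinor, Matrix.twoBlockTriangular_det M (fun s => p s)
    fun i hi j hj => h i i.2 j j.2 hi hj, block p, block (¬p ·)]

end PrincipalMinor

section Kernel

variable (ρ : Finset ℤ → ℝ)

theorem oneDepKernel_of_two_le {x y : ℤ} (h : 2 ≤ x - y) : oneDepKernel ρ x y = 0 :=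
  if_pos h

theorem oneDepKernel_of_sub_eq_one {x y : ℤ} (h : x - y = 1) : oneDepKernel ρ x y = -1 := by
  rw [oneDepKernel, if_neg (by omega), if_pos h]

noncomputable def chains (a b : ℤ) (r : ℕ) : Finset (Fin (r + 2) → ℤ) :=
  (Fintype.piFinset fun _ => Icc a b).filter
    (fun l => StrictMono l ∧ l 0 = a ∧ l (Fin.last (r + 1)) = b)

noncomputable def chainWeight {r : ℕ} (l : Fin (r + 2) → ℤ) : ℝ :=
  ∏ i : Fin (r + 1), ρ (Icc (l i.castSucc) (l i.succ - 1))

noncomputable def chainSum (a b : ℤ) (r : ℕ) : ℝ :=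
  ∑ l ∈ chains a b r, chainWeight ρ l

theorem mem_chains {a b : ℤ} {r : ℕ} {l : Fin (r + 2) → ℤ} :
    l ∈ chains a b r ↔ StrictMono l ∧ l 0 = a ∧ l (Fin.last (r + 1)) = b := by
  simp only [chains, mem_filter, Fintype.mem_piFinset, mem_Icc, and_iff_right_iff_imp]
  rintro ⟨hl, rfl, rfl⟩ i
  exact ⟨hl.monotone (Fin.zero_le i), hl.monotone (Fin.le_last i)⟩

theorem lt_of_mem_chains {a b : ℤ} {r : ℕ} {l : Fin (r + 2) → ℤ} (hl : l ∈ chains a b r) :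
    a < b := by
  obtain ⟨hmono, rfl, rfl⟩ := mem_chains.1 hl
  exact hmono Fin.last_pos

theorem cons_mem_chains {a b : ℤ} {r : ℕ} {l : Fin (r + 2) → ℤ} :
    (Fin.cons a l : Fin (r + 3) → ℤ) ∈ chains a b (r + 1) ↔ a < l 0 ∧ l ∈ chains (l 0) b r := by
  rw [mem_chains, mem_chains]
  change StrictMono (Matrix.vecCons a l) ∧ _ ↔ _
  rw [strictMono_vecCons, ← Fin.succ_last, Fin.cons_succ, Fin.cons_zero]
  tauto

theorem chainWeight_cons (a : ℤ) {r : ℕ} (l : Fin (r + 2) → ℤ) :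
    chainWeight ρ (Fin.cons a l : Fin (r + 3) → ℤ) = ρ (Icc a (l 0 - 1)) * chainWeight ρ l := by
  simp [chainWeight, Fin.prod_univ_succ]

theorem chains_eq_empty {a b : ℤ} {r : ℕ} (h : b - a ≤ r) : chains a b r = ∅ := by
  refine eq_empty_of_forall_notMem fun l hl => ?_
  have hsub : univ.image l ⊆ Icc a b := by
    intro v hv
    obtain ⟨i, -, rfl⟩ := mem_image.1 hv
    exact Fintype.mem_piFinset.1 (mem_filter.1 hl).1 i
  have hcard := card_le_card hsub
  rw [card_image_of_injective _ (mem_chains.1 hl).1.injective, card_univ, Fintype.card_fin,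
    Int.card_Icc] at hcard
  omega

theorem chainSum_zero {a b : ℤ} (h : a < b) : chainSum ρ a b 0 = ρ (Icc a (b - 1)) := by
  have hchains : chains a b 0 = {![a, b]} := by
    ext l
    rw [mem_chains, mem_singleton]
    constructor
    · rintro ⟨-, h0, h1⟩
      ext i
      fin_cases i
      exacts [h0, h1]
    · rintro rfl
      have hsingle : StrictMono ![b] := fun i j hij => by
        have := j.2
        rw [Fin.lt_def] at hij
        omega
      exact ⟨strictMono_vecCons.2 ⟨h, hsingle⟩, rfl, rfl⟩
  simp [chainSum, hchains, chainWeight]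

theorem chainSum_succ (a b : ℤ) (r : ℕ) :
    chainSum ρ a b (r + 1) = ∑ m ∈ Ioo a b, ρ (Icc a (m - 1)) * chainSum ρ m b r := by
  simp only [chainSum, mul_sum]
  rw [sum_sigma']
  have cons_tail {l : Fin (r + 3) → ℤ} (hl : l ∈ chains a b (r + 1)) :
      Fin.cons a (Fin.tail l) = l := by
    rw [← (mem_chains.1 hl).2.1, Fin.cons_self_tail]
  refine sum_nbij' (fun l => ⟨Fin.tail l 0, Fin.tail l⟩) (fun p => Fin.cons a p.2)
    (fun l hl => ?_) (fun p hp => ?_) (fun l hl => cons_tail hl) (fun p hp => ?_) (fun l hl => ?_)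
  · obtain ⟨hlt, htail⟩ := cons_mem_chains.1 ((cons_tail hl).symm ▸ hl)
    exact mem_sigma.2 ⟨mem_Ioo.2 ⟨hlt, lt_of_mem_chains htail⟩, htail⟩
  · obtain ⟨hm, hp⟩ := mem_sigma.1 hp
    have h0 := (mem_chains.1 hp).2.1
    exact cons_mem_chains.2 ⟨h0 ▸ (mem_Ioo.1 hm).1, h0 ▸ hp⟩
  · obtain ⟨-, hp⟩ := mem_sigma.1 hp
    simp only [Fin.tail_cons, (mem_chains.1 hp).2.1]
  · rw [← chainWeight_cons, cons_tail hl]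

theorem oneDepKernel_eq_sum_range {x y : ℤ} (h : x ≤ y) {N : ℕ} (hN : y - x < N) :
    oneDepKernel ρ x y = ∑ r ∈ range N, (-1) ^ r * chainSum ρ x (y + 1) r := by
  rw [oneDepKernel, if_neg (by omega), if_neg (by omega)]
  refine sum_subset (range_subset_range.2 (by omega)) fun r _ hr => ?_
  rw [mem_range, not_lt] at hr
  change (-1) ^ r * chainSum ρ x (y + 1) r = 0
  rw [chainSum, chains_eq_empty (by omega), sum_empty, mul_zero]

theorem oneDepKernel_eq_sub_sum {x y : ℤ} (h : x ≤ y) :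
    oneDepKernel ρ x y
      = ρ (Icc x y) - ∑ m ∈ Ioc x y, ρ (Icc x (m - 1)) * oneDepKernel ρ m y := by
  rw [← Ioo_add_one_right_eq_Ioc]
  set n := (y - x).toNat
  have tail_eq : ∑ r ∈ range n, (-1) ^ (r + 1) * chainSum ρ x (y + 1) (r + 1)
      = -∑ m ∈ Ioo x (y + 1), ρ (Icc x (m - 1)) * oneDepKernel ρ m y := by
    calc _ = ∑ r ∈ range n, ∑ m ∈ Ioo x (y + 1),
            -(ρ (Icc x (m - 1)) * ((-1) ^ r * chainSum ρ m (y + 1) r)) :=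
          sum_congr rfl fun r _ => by
            rw [chainSum_succ, mul_sum]
            exact sum_congr rfl fun m _ => by ring
      _ = ∑ m ∈ Ioo x (y + 1), -(ρ (Icc x (m - 1)) * oneDepKernel ρ m y) := by
          rw [sum_comm]
          refine sum_congr rfl fun m hm => ?_
          rw [mem_Ioo] at hm
          rw [oneDepKernel_eq_sum_range ρ (N := n) (by omega) (by omega), mul_sum,
            sum_neg_distrib]
      _ = _ := sum_neg_distrib _
  rw [oneDepKernel_eq_sum_range ρ h (N := n + 1) (by omega), sum_range_succ', pow_zero, one_mul,
    chainSum_zero ρ (by omega), add_sub_cancel_right, tail_eq, neg_add_eq_sub]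

theorem sum_Icc_mul_oneDepKernel (hρ0 : ρ ∅ = 1) {x y : ℤ} (h : x ≤ y) :
    ∑ m ∈ Icc x y, ρ (Icc x (m - 1)) * oneDepKernel ρ m y = ρ (Icc x y) := by
  rw [← add_sum_Ioc_eq_sum_Icc h, Icc_eq_empty_of_lt (sub_one_lt x), hρ0, one_mul,
    oneDepKernel_eq_sub_sum ρ h, sub_add_cancel]

theorem sum_Icc_mul_oneDepKernel_of_lt (hρ0 : ρ ∅ = 1) {x y z : ℤ} (h : x ≤ y) (hz : y < z) :
    ∑ m ∈ Icc x z, ρ (Icc x (m - 1)) * oneDepKernel ρ m y = 0 := by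
  rw [← sum_subset (Icc_subset_Icc_right (by omega : y + 1 ≤ z)) fun m hm hm' => ?_,
    ← insert_Icc_right_eq_Icc_add_one (by omega), sum_insert (by simp),
    sum_Icc_mul_oneDepKernel ρ hρ0 h, oneDepKernel_of_sub_eq_one ρ (by ring),
    add_sub_cancel_right]
  · ring
  · simp only [mem_Icc, not_and, not_le] at hm hm'
    rw [oneDepKernel_of_two_le ρ (by omega), mul_zero]

theorem image_add_fin_eq_Icc (x : ℤ) (n : ℕ) :
    univ.image (fun t : Fin (n + 1) => x + (t : ℕ)) = Icc x (x + n) := by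
  ext m
  simp only [mem_image, mem_univ, true_and, mem_Icc]
  constructor
  · rintro ⟨t, rfl⟩
    omega
  · intro hm
    exact ⟨⟨(m - x).toNat, by omega⟩, by simp; omega⟩

theorem add_fin_injective (x : ℤ) (n : ℕ) :
    Function.Injective fun t : Fin (n + 1) => x + (t : ℕ) := fun s t hst => by
  simp only [add_right_inj, Nat.cast_inj] at hst
  exact Fin.ext hst

theorem det_oneDepKernel_add_fin (hρ0 : ρ ∅ = 1) (x : ℤ) (n : ℕ) :
    (Matrix.of fun i j : Fin (n + 1) => oneDepKernel ρ (x + (i : ℕ)) (x + (j : ℕ))).det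
      = ρ (Icc x (x + n)) := by
  set H := Matrix.of fun i j : Fin (n + 1) => oneDepKernel ρ (x + (i : ℕ)) (x + (j : ℕ))
  set c : Fin (n + 1) → ℝ := fun t => ρ (Icc x (x + (t : ℕ) - 1))
  have hc0 : c 0 = 1 := by simp [c, hρ0]
  have hrow : ∑ t, c t • H t = Pi.single (Fin.last n) (ρ (Icc x (x + n))) := by
    funext j
    have hsum : (∑ t, c t • H t) j
        = ∑ m ∈ Icc x (x + n), ρ (Icc x (m - 1)) * oneDepKernel ρ m (x + (j : ℕ)) := by
      rw [← image_add_fin_eq_Icc, sum_image fun s _ t _ hst => add_fin_injective x n hst]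
      simp [c, H]
    rw [hsum]
    obtain ⟨j, rfl⟩ | rfl := j.eq_castSucc_or_eq_last
    · rw [Pi.single_eq_of_ne (Fin.castSucc_ne_last j)]
      exact sum_Icc_mul_oneDepKernel_of_lt ρ hρ0 (by omega) (by simp)
    · rw [Pi.single_eq_same, Fin.val_last]
      exact sum_Icc_mul_oneDepKernel ρ hρ0 (by omega)
  have hminor : (H.submatrix Fin.succ Fin.castSucc).det = (-1) ^ n := by
    rw [Matrix.det_of_isUpperTriangular, prod_congr rfl fun i _ => ?_, prod_const, card_univ,
      Fintype.card_fin]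
    · exact oneDepKernel_of_sub_eq_one ρ (by simp)
    · intro i j hji
      exact oneDepKernel_of_two_le ρ (by simp at hji ⊢; omega)
  calc H.det = (H.updateRow 0 (∑ t, c t • H t)).det := by
        rw [Matrix.det_updateRow_sum, hc0, one_smul]
    _ = _ := by
        rw [hrow, Matrix.det_succ_row_zero, Fintype.sum_eq_single (Fin.last n)]
        · rw [Matrix.updateRow_self, Pi.single_eq_same, Fin.succAbove_last, ← Fin.succAbove_zero,
            Matrix.submatrix_updateRow_succAbove, Fin.succAbove_zero, hminor, Fin.val_last,
            mul_right_comm, ← pow_add, Even.neg_one_pow ⟨n, rfl⟩, one_mul]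
        · intro j hj
          rw [Matrix.updateRow_self, Pi.single_eq_of_ne hj, mul_zero, zero_mul]

theorem principalMinor_oneDepKernel_Icc (hρ0 : ρ ∅ = 1) (x y : ℤ) :
    principalMinor (oneDepKernel ρ) (Icc x y) = ρ (Icc x y) := by
  rcases lt_or_ge y x with h | h
  · rw [Icc_eq_empty_of_lt h, hρ0]
    exact Matrix.det_isEmpty
  · obtain ⟨n, rfl⟩ : ∃ n : ℕ, y = x + n := ⟨(y - x).toNat, by omega⟩
    rw [← image_add_fin_eq_Icc, principalMinor_image _ _ (add_fin_injective x n),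
      det_oneDepKernel_add_fin ρ hρ0, image_add_fin_eq_Icc]

end Kernel

theorem Finset.exists_eq_Icc_of_add_one_mem {S : Finset ℤ}
    (h : ∀ g ∈ S, ∀ s ∈ S, g < s → g + 1 ∈ S) : ∃ x y, S = Icc x y := by
  rcases S.eq_empty_or_nonempty with rfl | hS
  · exact ⟨1, 0, rfl⟩
  refine ⟨S.min' hS, S.max' hS, Subset.antisymm
    (fun v hv => mem_Icc.2 ⟨min'_le _ _ hv, le_max' _ _ hv⟩) fun v hv => ?_⟩
  obtain ⟨hlo, hhi⟩ := mem_Icc.1 hv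
  clear hv
  induction v, hlo using Int.leInduction with
  | base => exact min'_mem _ _
  | succ v _ ih => exact h v (ih (by omega)) _ (max'_mem _ _) (by omega)

theorem principalMinor_oneDepKernel {ρ : Finset ℤ → ℝ} (hρ0 : ρ ∅ = 1)
    (honedep : ∀ A B : Finset ℤ, (∀ a ∈ A, ∀ b ∈ B, 2 ≤ |a - b|) → ρ (A ∪ B) = ρ A * ρ B)
    (S : Finset ℤ) : principalMinor (oneDepKernel ρ) S = ρ S := by
  induction S using Finset.strongInduction with
  | H S ih =>
  by_cases hconn : ∀ g ∈ S, ∀ s ∈ S, g < s → g + 1 ∈ S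
  · obtain ⟨x, y, rfl⟩ := Finset.exists_eq_Icc_of_add_one_mem hconn
    exact principalMinor_oneDepKernel_Icc ρ hρ0 x y
  push Not at hconn
  obtain ⟨g, hg, s, hs, hgs, hgap⟩ := hconn
  have hsep : ∀ i ∈ S, ∀ j ∈ S, ¬i ≤ g → j ≤ g → 2 ≤ i - j := fun i hi j _ hig hjg => by
    have : i ≠ g + 1 := by rintro rfl; exact hgap hi
    omega
  rw [principalMinor_eq_mul_filter _ S (· ≤ g) fun i hi j hj hig hjg =>
      oneDepKernel_of_two_le ρ (hsep i hi j hj hig hjg),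
    ih _ (filter_ssubset.2 ⟨s, hs, by omega⟩), ih _ (filter_ssubset.2 ⟨g, hg, by simp⟩),
    ← honedep, filter_union_filter_not_eq]
  intro a ha b hb
  rw [mem_filter] at ha hb
  rw [abs_sub_comm]
  exact (hsep b hb.1 a ha.1 hb.2 ha.2).trans (le_abs_self _)

theorem oneDependent_determinantal_general (lo hi : ℤ) (p : Finset ℤ → ℝ)
    (hp1 : ∑ S ∈ (Finset.Icc lo hi).powerset, p S = 1)
    (ρ : Finset ℤ → ℝ)
    (hρ : ∀ A, ρ A = ∑ S ∈ (Finset.Icc lo hi).powerset.filter (fun S => A ⊆ S), p S)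
    (honedep : ∀ A B : Finset ℤ, (∀ a ∈ A, ∀ b ∈ B, 2 ≤ |a - b|) →
      ρ (A ∪ B) = ρ A * ρ B)
    (n : ℕ) (a : Fin n → ℤ) (ha : Function.Injective a) :
    ρ (Finset.image a Finset.univ)
      = Matrix.det (Matrix.of fun i j : Fin n => oneDepKernel ρ (a i) (a j)) := by
  have hρ0 : ρ ∅ = 1 := by
    rw [hρ, filter_true_of_mem fun S _ => empty_subset S, hp1]
  rw [← principalMinor_image _ a ha, principalMinor_oneDepKernel hρ0 honedep]

/-- a one-dependent point process on a finite segment `[lo, hi]` of `ℤ`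
is determinantal with the explicit kernel `oneDepKernel ρ`.  Here `p` is the probability
measure on configurations (subsets of the segment), `ρ A = Pr{A ⊆ config}` are its
correlation functions, and one-dependence means `ρ(A ∪ B) = ρ(A)·ρ(B)` whenever
`dist(A,B) ≥ 2`. -/
theorem oneDependent_determinantal (lo hi : ℤ) (p : Finset ℤ → ℝ)
    (hp0 : ∀ S, 0 ≤ p S) (hp1 : ∑ S ∈ (Finset.Icc lo hi).powerset, p S = 1)
    (hsupp : ∀ S : Finset ℤ, p S ≠ 0 → S ⊆ Finset.Icc lo hi)
    (ρ : Finset ℤ → ℝ)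
    (hρ : ∀ A, ρ A = ∑ S ∈ (Finset.Icc lo hi).powerset.filter (fun S => A ⊆ S), p S)
    (honedep : ∀ A B : Finset ℤ, (∀ a ∈ A, ∀ b ∈ B, 2 ≤ |a - b|) →
      ρ (A ∪ B) = ρ A * ρ B)
    (n : ℕ) (a : Fin n → ℤ) (ha : Function.Injective a)
    (haseg : ∀ i, a i ∈ Finset.Icc lo hi) :
    ρ (Finset.image a Finset.univ)
      = Matrix.det (Matrix.of fun i j : Fin n => oneDepKernel ρ (a i) (a j)) :=
  oneDependent_determinantal_general lo hi p hp1 ρ hρ honedep n a ha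
end

section
/- (Burton–Pemantle, finite form) Let G be a finite connected graph with edge set E, fix an orientation of the edges, and let K be the transfer current matrix, i.e. the matrix of the orthogonal projection in ℝ^E onto the star space Span{a(v) : v vertex}, where a(v) = Σ_e a_e(v) δ_e with a_e(v) = 1 if v is the tail of e, −1 if v is the head, 0 otherwise. Then for any distinct edges e_1,...,e_n, the probability that a uniformly random spanning tree of G contains all of e_1,...,e_n equals det[K(e_i,e_j)]_{i,j=1}^n. -/
/-!
Fix a root `v₀` and let `B` be the incidence matrix with the column of `v₀` deleted. Its columns
are the star vectors `a v`, `v ≠ v₀`, and they span the star space because `a v₀ = -∑ a v`; hence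
`K = B (BᵀB)⁻¹ Bᵀ`. The matrix `B` is totally unimodular, and a square set `s` of its rows is
nonsingular exactly when the edges of `s` connect the graph, so Cauchy–Binet gives the weighted
matrix-tree theorem `det (Bᵀ diag w B) = ∑_T ∏_{e ∈ T} w e`. Taking for `w` the indicator of the
edges outside a set `A`, the matrix determinant lemma turns this into
`det (1 - K_A) = P(T ∩ A = ∅)`. Finally `det K_S` is an alternating sum of the principal minors
`det (1 - K_A)`, `A ⊆ S`, which inclusion–exclusion turns into `P(S ⊆ T)`.
-/

open scoped Classical
open Finset Matrix

namespace Matrix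

variable {m n R : Type*} [Fintype m] [DecidableEq m] [Fintype n] [DecidableEq n] [CommRing R]

theorem det_one_add_eq_sum_det_submatrix (M : Matrix n n R) :
    (1 + M).det = ∑ s : Finset n, (M.submatrix (Subtype.val : s → n) Subtype.val).det := by
  have hrows : (1 + M : Matrix n n R) = (fun i => M i) + (fun i => (1 : Matrix n n R) i) :=
    add_comm _ _
  rw [det, hrows, (detRowAlternating : (n → R) [⋀^n]→ₗ[R] R).map_add_univ]
  exact sum_congr rfl fun s _ => det_piecewise_one_eq_submatrix_det M s

theorem det_eq_sum_neg_one_pow_mul_det_one_sub_submatrix (M : Matrix n n R) :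
    M.det = ∑ s : Finset n,
      (-1) ^ #s * ((1 - M).submatrix (Subtype.val : s → n) Subtype.val).det := by
  calc M.det = (1 + (M - 1)).det := by rw [add_sub_cancel]
    _ = _ := by
      rw [det_one_add_eq_sum_det_submatrix]
      refine sum_congr rfl fun s _ => ?_
      rw [← neg_sub, ← Fintype.card_coe]
      exact det_neg _

/-- Cauchy–Binet: compare the coefficients of `X ^ card m` in the two sides of the
Weinstein–Aronszajn identity `det (1 + X • A * B) = det (1 + X • B * A)`. -/
theorem det_mul_eq_sum_det_submatrix_mul (A : Matrix m n R) (B : Matrix n m R) :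
    (A * B).det = ∑ s ∈ powersetCard (Fintype.card m) univ,
      ((B * A).submatrix (Subtype.val : s → n) Subtype.val).det := by
  open Polynomial in
  have hcomm : (1 + (X : R[X]) • (A * B).map C).det = (1 + (X : R[X]) • (B * A).map C).det := by
    rw [Matrix.map_mul, Matrix.map_mul, ← smul_mul, det_one_add_mul_comm, Matrix.mul_smul]
  have := congrArg (coeff · (Fintype.card m)) hcomm
  simp only [coeff_det_one_add_X_smul_eq_sum_minors] at this
  rw [← this, ← card_univ, powersetCard_self, sum_singleton]
  exact (det_submatrix_equiv_self (Equiv.subtypeUnivEquiv mem_univ) _).symm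

theorem det_transpose_mul_diagonal_mul_of_injective {ι : Type*} [Fintype ι] [DecidableEq ι]
    (B : Matrix n m R) {g : ι → n} (hg : Function.Injective g) (hG : IsUnit (Bᵀ * B).det) :
    (Bᵀ * diagonal (fun e => if e ∈ Set.range g then (0 : R) else 1) * B).det =
      (Bᵀ * B).det * ((1 - B * (Bᵀ * B)⁻¹ * Bᵀ).submatrix g g).det := by
  have hsplit : Bᵀ * diagonal (fun e => if e ∈ Set.range g then (0 : R) else 1) * B =
      Bᵀ * B - (B.submatrix g id)ᵀ * B.submatrix g id := by
    ext a b
    have hrange : ∑ i, B (g i) a * B (g i) b =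
        ∑ e, if e ∈ Set.range g then B e a * B e b else 0 := by
      rw [← sum_image (f := fun e => B e a * B e b) fun _ _ _ _ h => hg h, ← sum_filter]
      congr 1
      ext e
      simp
    simp only [sub_apply, mul_apply, transpose_apply, submatrix_apply, id, diagonal_apply,
      mul_ite, mul_zero, sum_ite_eq', mem_univ, if_true, hrange, ← sum_sub_distrib]
    refine sum_congr rfl fun e _ => ?_
    split_ifs <;> ring
  rw [hsplit, sub_eq_add_neg, ← Matrix.neg_mul, det_add_mul _ _ hG, Matrix.mul_neg,
    ← sub_eq_add_neg]
  congr 2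
  ext i j
  simp [mul_apply, one_apply, hg.eq_iff]

theorem starProjection_span_columns {E W : Type*} [Fintype E] [Fintype W] [DecidableEq W]
    (B : Matrix E W ℝ) (hG : IsUnit (Bᵀ * B).det) (x : EuclideanSpace ℝ E) :
    (Submodule.span ℝ (Set.range fun w => WithLp.toLp 2 (Bᵀ w))).starProjection x =
      WithLp.toLp 2 ((B * (Bᵀ * B)⁻¹ * Bᵀ) *ᵥ x.ofLp) := by
  set y := (Bᵀ * B)⁻¹ *ᵥ Bᵀ *ᵥ x.ofLp
  have hcols : WithLp.toLp 2 ((B * (Bᵀ * B)⁻¹ * Bᵀ) *ᵥ x.ofLp) =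
      ∑ w, y w • WithLp.toLp 2 (Bᵀ w) := by
    have hy : (B * (Bᵀ * B)⁻¹ * Bᵀ) *ᵥ x.ofLp = B *ᵥ y := by
      simp only [y, mulVec_mulVec, Matrix.mul_assoc]
    ext e
    rw [hy]
    simp [mulVec, dotProduct, mul_comm]
  refine Submodule.eq_starProjection_of_mem_of_inner_eq_zero ?_ fun u hu => ?_
  · rw [hcols]
    exact Submodule.sum_mem _ fun w _ => Submodule.smul_mem _ _ (Submodule.subset_span ⟨w, rfl⟩)
  · suffices Submodule.span ℝ (Set.range fun w => WithLp.toLp 2 (Bᵀ w)) ≤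
        LinearMap.ker (innerₛₗ ℝ (x - WithLp.toLp 2 ((B * (Bᵀ * B)⁻¹ * Bᵀ) *ᵥ x.ofLp))) from
      this hu
    rw [Submodule.span_le]
    rintro _ ⟨w, rfl⟩
    have hnormal : Bᵀ *ᵥ (x.ofLp - (B * (Bᵀ * B)⁻¹ * Bᵀ) *ᵥ x.ofLp) = 0 := by
      rw [mulVec_sub, mulVec_mulVec, ← Matrix.mul_assoc, ← Matrix.mul_assoc,
        mul_nonsing_inv _ hG, Matrix.one_mul, sub_self]
    have := congrFun hnormal w
    simp only [mulVec, Pi.zero_apply] at this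
    simp only [SetLike.mem_coe, LinearMap.mem_ker, innerₛₗ_apply_apply,
      EuclideanSpace.inner_eq_star_dotProduct]
    exact this

end Matrix

theorem Finset.sum_neg_one_pow_mul_card_filter_forall_not {R α ι : Type*} [CommRing R]
    [Fintype ι] (s : Finset α) (P : ι → α → Prop) [∀ i a, Decidable (P i a)] :
    ∑ A : Finset ι, (-1 : R) ^ #A * #{a ∈ s | ∀ i ∈ A, ¬ P i a} = #{a ∈ s | ∀ i, P i a} := by
  simp_rw [natCast_card_filter, mul_sum]
  rw [sum_comm]
  refine sum_congr rfl fun a _ => ?_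
  have hsub (A : Finset ι) :
      (∀ i ∈ A, ¬ P i a) ↔ A ∈ (univ.filter fun i => ¬ P i a).powerset := by
    simp [subset_iff]
  simp_rw [mul_ite, mul_one, mul_zero, hsub, ← sum_filter, filter_mem_eq_inter, univ_inter]
  have := congrArg (Int.cast : ℤ → R)
    (sum_powerset_neg_one_pow_card (x := univ.filter fun i => ¬ P i a))
  push_cast at this
  rw [this]
  simp [filter_eq_empty_iff]

section Graph

variable {V E : Type*} {tail head : E → V}

noncomputable def incidenceMatrix (tail head : E → V) : Matrix E V ℝ :=
  Matrix.of fun e v => if tail e = v then 1 else if head e = v then -1 else 0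

@[simp]
lemma incidenceMatrix_apply (e : E) (v : V) :
    incidenceMatrix tail head e v = if tail e = v then 1 else if head e = v then -1 else 0 :=
  rfl

lemma incidenceMatrix_apply_ne_zero_iff {e : E} {v : V} :
    incidenceMatrix tail head e v ≠ 0 ↔ tail e = v ∨ head e = v := by
  rw [incidenceMatrix_apply]
  split_ifs <;> simp_all

lemma incidenceMatrix_row {e : E} (h : tail e ≠ head e) :
    incidenceMatrix tail head e = Pi.single (tail e) 1 - Pi.single (head e) 1 := by
  ext v
  simp only [incidenceMatrix_apply, Pi.sub_apply, Pi.single_apply]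
  split_ifs <;> grind

theorem incidenceMatrix_isTotallyUnimodular :
    (incidenceMatrix tail head).IsTotallyUnimodular := by
  rw [isTotallyUnimodular_iff]
  intro k
  induction k with
  | zero => exact fun f g => ⟨1, by simp⟩
  | succ k ih =>
    intro f g
    set M := (incidenceMatrix tail head).submatrix f g
    by_cases hsparse : ∃ i j, ∀ j' ≠ j, M i j' = 0
    · obtain ⟨i, j, hj⟩ := hsparse
      rw [det_succ_row M i, Fintype.sum_eq_single j fun j' h => by rw [hj j' h]; ring]
      obtain ⟨s, hs⟩ := ih (f ∘ i.succAbove) (g ∘ j.succAbove)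
      obtain ⟨t, ht⟩ : M i j ∈ Set.range SignType.cast := by
        simp only [M, submatrix_apply, incidenceMatrix_apply]
        split_ifs
        exacts [⟨1, rfl⟩, ⟨-1, rfl⟩, ⟨0, rfl⟩]
      refine ⟨(-1) ^ ((i : ℕ) + j) * t * s, ?_⟩
      have hminor : M.submatrix i.succAbove j.succAbove =
          (incidenceMatrix tail head).submatrix (f ∘ i.succAbove) (g ∘ j.succAbove) := rfl
      rw [hminor, ← hs, ← ht]
      push_cast
      rfl
    push Not at hsparse
    by_cases hg : Function.Injective g
    · -- each row of `M` has its `1` and its `-1` inside `M`, so the columns of `M` sum to zero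
      refine ⟨0, ?_⟩
      rw [SignType.coe_zero, eq_comm, ← exists_mulVec_eq_zero_iff]
      refine ⟨fun _ => 1, fun h => one_ne_zero (congrFun h 0), funext fun i => ?_⟩
      obtain ⟨j₁, -, h₁⟩ := hsparse i 0
      obtain ⟨j₂, h₂₁, h₂⟩ := hsparse i j₁
      have hends : tail (f i) ≠ head (f i) ∧
          tail (f i) ∈ univ.image g ∧ head (f i) ∈ univ.image g := by
        simp only [M, submatrix_apply, incidenceMatrix_apply_ne_zero_iff] at h₁ h₂
        have := hg.ne h₂₁
        grind
      simp only [mulVec, dotProduct, mul_one, M, submatrix_apply, Pi.zero_apply]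
      rw [← sum_image fun _ _ _ _ h => hg h, incidenceMatrix_row hends.1]
      simp [sum_pi_single', hends]
    · obtain ⟨j₁, j₂, hg₁₂, hne⟩ := Function.not_injective_iff.mp hg
      exact ⟨0, (det_zero_of_column_eq hne fun i => by simp [M, hg₁₂]).symm⟩

def AdjVia (tail head : E → V) (T : Finset E) (p q : V) : Prop :=
  ∃ e ∈ T, (tail e = p ∧ head e = q) ∨ (tail e = q ∧ head e = p)

instance (T : Finset E) : Std.Symm (AdjVia tail head T) :=
  ⟨fun _ _ ⟨e, he, h⟩ => ⟨e, he, h.symm⟩⟩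

def Connects (tail head : E → V) (T : Finset E) : Prop :=
  ∀ u v, Relation.ReflTransGen (AdjVia tail head T) u v

lemma eq_of_reflTransGen_adjVia {α : Type*} {T : Finset E} {φ : V → α}
    (hφ : ∀ e ∈ T, φ (tail e) = φ (head e)) {u v : V}
    (h : Relation.ReflTransGen (AdjVia tail head T) u v) : φ u = φ v := by
  induction h with
  | refl => rfl
  | tail _ hadj ih =>
    obtain ⟨e, he, ⟨rfl, rfl⟩ | ⟨rfl, rfl⟩⟩ := hadj
    exacts [ih.trans (hφ e he), ih.trans (hφ e he).symm]

noncomputable def reducedIncidenceMatrix (tail head : E → V) (v₀ : V) :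
    Matrix E {v // v ≠ v₀} ℝ :=
  (incidenceMatrix tail head).submatrix id Subtype.val

lemma extend_val_apply_root {v₀ : V} (c : {v // v ≠ v₀} → ℝ) :
    Function.extend Subtype.val c 0 v₀ = 0 :=
  Function.extend_apply' _ _ _ fun ⟨w, hw⟩ => w.2 hw

variable [Fintype V]

lemma incidenceMatrix_mulVec_apply (hsimple : ∀ e, tail e ≠ head e) (φ : V → ℝ) (e : E) :
    (incidenceMatrix tail head *ᵥ φ) e = φ (tail e) - φ (head e) := by
  rw [mulVec, incidenceMatrix_row (hsimple e), sub_dotProduct, single_dotProduct,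
    single_dotProduct, one_mul, one_mul]

variable {v₀ : V}

lemma reducedIncidenceMatrix_mulVec (c : {v // v ≠ v₀} → ℝ) :
    reducedIncidenceMatrix tail head v₀ *ᵥ c =
      incidenceMatrix tail head *ᵥ Function.extend Subtype.val c 0 := by
  funext e
  simp only [mulVec, dotProduct, reducedIncidenceMatrix, submatrix_apply, id]
  have hroot : ∀ x : {v // ¬ v ≠ v₀},
      incidenceMatrix tail head e x * Function.extend Subtype.val c 0 x = 0 := fun x => by
    rw [show (x : V) = v₀ from not_not.mp x.2, extend_val_apply_root, mul_zero]
  rw [← Fintype.sum_subtype_add_sum_subtype (fun v => v ≠ v₀), Fintype.sum_eq_zero _ hroot,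
    add_zero]
  simp only [Subtype.val_injective.extend_apply]

theorem connects_iff_forall_mulVec_eq_zero (hsimple : ∀ e, tail e ≠ head e) (T : Finset E) :
    Connects tail head T ↔
      ∀ c, (∀ e ∈ T, (reducedIncidenceMatrix tail head v₀ *ᵥ c) e = 0) → c = 0 := by
  constructor
  · intro hT c hc
    funext w
    have hφ : ∀ e ∈ T, Function.extend Subtype.val c 0 (tail e) =
        Function.extend Subtype.val c 0 (head e) := fun e he => by
      rw [← sub_eq_zero, ← incidenceMatrix_mulVec_apply hsimple, ← reducedIncidenceMatrix_mulVec]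
      exact hc e he
    have := eq_of_reflTransGen_adjVia hφ (hT w v₀)
    rwa [Subtype.val_injective.extend_apply, extend_val_apply_root] at this
  · intro hinj
    by_contra hT
    obtain ⟨z, hz⟩ : ∃ z, ¬ Relation.ReflTransGen (AdjVia tail head T) v₀ z := by
      by_contra! hall
      exact hT fun u v => (Std.Symm.symm _ _ (hall u)).trans (hall v)
    -- the indicator of the vertices out of reach of `v₀` is a nonzero vector in the kernel
    set φ : V → ℝ := fun x => if Relation.ReflTransGen (AdjVia tail head T) v₀ x then 0 else 1
    have hext : Function.extend Subtype.val (fun w : {v // v ≠ v₀} => φ w) 0 = φ := by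
      funext x
      by_cases hx : x = v₀
      · subst hx
        simp [φ, Relation.ReflTransGen.refl]
      · exact Subtype.val_injective.extend_apply _ _ ⟨x, hx⟩
    have hφ := hinj (fun w => φ w) fun e he => by
      rw [reducedIncidenceMatrix_mulVec, hext, incidenceMatrix_mulVec_apply hsimple, sub_eq_zero]
      have : Relation.ReflTransGen (AdjVia tail head T) v₀ (tail e) ↔
          Relation.ReflTransGen (AdjVia tail head T) v₀ (head e) :=
        ⟨fun h => h.tail ⟨e, he, Or.inl ⟨rfl, rfl⟩⟩, fun h => h.tail ⟨e, he, Or.inr ⟨rfl, rfl⟩⟩⟩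
      simp only [φ, this]
    have hzv : z ≠ v₀ := fun h => hz (h ▸ Relation.ReflTransGen.refl)
    simpa [φ, hz] using congrFun hφ ⟨z, hzv⟩

theorem isUnit_det_reducedIncidenceMatrix_gram [Fintype E] (hsimple : ∀ e, tail e ≠ head e)
    (hconn : Connects tail head univ) :
    IsUnit ((reducedIncidenceMatrix tail head v₀)ᵀ * reducedIncidenceMatrix tail head v₀).det := by
  rw [isUnit_iff_ne_zero, Ne, ← exists_mulVec_eq_zero_iff]
  rintro ⟨c, hc, hGc⟩
  have hBc : c ∈ LinearMap.ker (reducedIncidenceMatrix tail head v₀).mulVecLin := by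
    rw [← ker_mulVecLin_transpose_mul_self]
    exact hGc
  exact hc ((connects_iff_forall_mulVec_eq_zero hsimple univ).mp hconn c
    fun e _ => congrFun hBc e)

lemma span_range_eq_span_reducedIncidenceMatrix_columns [Fintype E]
    (hsimple : ∀ e, tail e ≠ head e) {a : V → EuclideanSpace ℝ E}
    (ha : ∀ v e, a v e = if tail e = v then 1 else if head e = v then -1 else 0) :
    Submodule.span ℝ (Set.range a) = Submodule.span ℝ
      (Set.range fun w => WithLp.toLp 2 ((reducedIncidenceMatrix tail head v₀)ᵀ w)) := by
  have hcol (w : {v // v ≠ v₀}) :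
      a w = WithLp.toLp 2 ((reducedIncidenceMatrix tail head v₀)ᵀ w) := by
    ext e
    simp [ha, reducedIncidenceMatrix]
  have hroot : a v₀ = -∑ w : {v // v ≠ v₀}, a w := by
    ext e
    have := incidenceMatrix_mulVec_apply hsimple 1 e
    rw [mulVec, dotProduct, Fintype.sum_eq_add_sum_subtype_ne _ v₀] at this
    simp only [incidenceMatrix_apply, ← ha, Pi.one_apply, mul_one, sub_self] at this
    simp only [WithLp.ofLp_neg, WithLp.ofLp_sum, Pi.neg_apply, Finset.sum_apply]
    linarith
  apply le_antisymm
  · rw [Submodule.span_le]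
    rintro _ ⟨v, rfl⟩
    by_cases hv : v = v₀
    · rw [hv, hroot]
      exact neg_mem (sum_mem fun w _ => Submodule.subset_span ⟨w, (hcol w).symm⟩)
    · exact Submodule.subset_span ⟨⟨v, hv⟩, (hcol _).symm⟩
  · exact Submodule.span_mono (by rintro _ ⟨w, rfl⟩; exact ⟨w, hcol w⟩)

variable [DecidableEq E]

theorem det_submatrix_reducedIncidenceMatrix_mul_transpose (hsimple : ∀ e, tail e ≠ head e)
    {s : Finset E} (hs : #s = Fintype.card {v // v ≠ v₀}) :
    ((reducedIncidenceMatrix tail head v₀ * (reducedIncidenceMatrix tail head v₀)ᵀ).submatrix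
      (Subtype.val : s → E) Subtype.val).det = if Connects tail head s then 1 else 0 := by
  set B := reducedIncidenceMatrix tail head v₀
  let σ : s ≃ {v // v ≠ v₀} := Fintype.equivOfCardEq (by rw [Fintype.card_coe, hs])
  set Y : Matrix s s ℝ := B.submatrix Subtype.val σ
  have hY : (B * Bᵀ).submatrix Subtype.val Subtype.val = Y * Yᵀ := by
    rw [transpose_submatrix, submatrix_mul_equiv]
  have hYc (c : s → ℝ) (e : s) : (Y *ᵥ c) e = (B *ᵥ (c ∘ σ.symm)) e := by
    simp [Y, submatrix_mulVec_equiv]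
  obtain ⟨t, ht⟩ : Y.det ∈ Set.range SignType.cast :=
    (isTotallyUnimodular_iff_fintype B).mp
      (incidenceMatrix_isTotallyUnimodular.submatrix id Subtype.val) s Subtype.val σ
  rw [hY, det_mul, det_transpose, ← ht]
  split_ifs with hT
  · have hdet : Y.det ≠ 0 := by
      intro h0
      obtain ⟨c, hc, hYc0⟩ := exists_mulVec_eq_zero_iff.mpr h0
      refine hc (funext fun w => ?_)
      have := (connects_iff_forall_mulVec_eq_zero hsimple s).mp hT (c ∘ σ.symm) fun e he => by
        rw [← hYc _ ⟨e, he⟩]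
        exact congrFun hYc0 ⟨e, he⟩
      simpa using congrFun this (σ w)
    rw [← ht] at hdet
    rcases t with _ | _ | _ <;> simp at hdet ⊢
  · obtain ⟨c, hc, hBc⟩ : ∃ c, c ≠ 0 ∧ ∀ e ∈ s, (B *ᵥ c) e = 0 := by
      rw [connects_iff_forall_mulVec_eq_zero hsimple] at hT
      push Not at hT
      exact ⟨hT.choose, hT.choose_spec.2, hT.choose_spec.1⟩
    have hdet : Y.det = 0 := exists_mulVec_eq_zero_iff.mp
      ⟨c ∘ σ, fun h => hc (funext fun w => by simpa using congrFun h (σ.symm w)),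
        funext fun e => by simpa [hYc, Function.comp_assoc] using hBc e e.2⟩
    rw [← ht] at hdet
    rw [hdet]
    ring

variable [Fintype E]

noncomputable def spanningTrees (tail head : E → V) : Finset (Finset E) :=
  univ.filter fun T => Connects tail head T ∧ #T = Fintype.card V - 1

theorem det_reducedIncidenceMatrix_transpose_mul_diagonal_mul (hsimple : ∀ e, tail e ≠ head e)
    (v₀ : V) (w : E → ℝ) :
    ((reducedIncidenceMatrix tail head v₀)ᵀ * diagonal w * reducedIncidenceMatrix tail head v₀).det
      = ∑ T ∈ spanningTrees tail head, ∏ e ∈ T, w e := by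
  have hcard : Fintype.card {v // v ≠ v₀} = Fintype.card V - 1 := by
    rw [Fintype.card_subtype_compl, Fintype.card_subtype_eq]
  rw [Matrix.mul_assoc, det_mul_eq_sum_det_submatrix_mul, ← univ_filter_card_eq, sum_filter,
    spanningTrees, sum_filter]
  refine sum_congr rfl fun s _ => ?_
  by_cases hs : #s = Fintype.card {v // v ≠ v₀}
  · have hdiag : (diagonal w * reducedIncidenceMatrix tail head v₀ *
          (reducedIncidenceMatrix tail head v₀)ᵀ).submatrix (Subtype.val : s → E) Subtype.val =
        diagonal (fun e : s => w e) * (reducedIncidenceMatrix tail head v₀ *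
          (reducedIncidenceMatrix tail head v₀)ᵀ).submatrix Subtype.val Subtype.val := by
      rw [Matrix.mul_assoc]
      ext i j
      simp [diagonal_mul]
    rw [if_pos hs, hdiag, det_mul, det_diagonal,
      det_submatrix_reducedIncidenceMatrix_mul_transpose hsimple hs, prod_coe_sort, mul_ite,
      mul_one, mul_zero, ← hcard]
    simp only [hs, and_true]
  · rw [if_neg hs, if_neg fun h => hs (h.2.trans hcard.symm)]

theorem card_spanningTrees_eq_det (hsimple : ∀ e, tail e ≠ head e) (v₀ : V) :
    (#(spanningTrees tail head) : ℝ) =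
      ((reducedIncidenceMatrix tail head v₀)ᵀ * reducedIncidenceMatrix tail head v₀).det := by
  simpa using (det_reducedIncidenceMatrix_transpose_mul_diagonal_mul hsimple v₀ 1).symm

theorem card_filter_spanningTrees_forall_notMem (hsimple : ∀ e, tail e ≠ head e)
    {ι : Type*} [Fintype ι] (g : ι → E) :
    (#{T ∈ spanningTrees tail head | ∀ i, g i ∉ T} : ℝ) =
      ((reducedIncidenceMatrix tail head v₀)ᵀ *
        diagonal (fun e => if e ∈ Set.range g then (0 : ℝ) else 1) *
          reducedIncidenceMatrix tail head v₀).det := by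
  rw [det_reducedIncidenceMatrix_transpose_mul_diagonal_mul hsimple, natCast_card_filter]
  refine sum_congr rfl fun T _ => ?_
  rw [prod_congr rfl fun e _ => (ite_not (e ∈ Set.range g) (1 : ℝ) 0).symm, prod_boole]
  simp only [Set.mem_range, not_exists]
  exact if_congr ⟨fun h e he i hie => h i (hie ▸ he), fun h i hi => h _ hi i rfl⟩ rfl rfl

theorem card_filter_spanningTrees_forall_mem (hsimple : ∀ e, tail e ≠ head e)
    (hG : IsUnit ((reducedIncidenceMatrix tail head v₀)ᵀ * reducedIncidenceMatrix tail head v₀).det)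
    {ι : Type*} [Fintype ι] [DecidableEq ι] {g : ι → E} (hg : Function.Injective g) :
    (#{T ∈ spanningTrees tail head | ∀ i, g i ∈ T} : ℝ) =
      ((reducedIncidenceMatrix tail head v₀)ᵀ * reducedIncidenceMatrix tail head v₀).det *
        ((reducedIncidenceMatrix tail head v₀ * ((reducedIncidenceMatrix tail head v₀)ᵀ *
          reducedIncidenceMatrix tail head v₀)⁻¹ * (reducedIncidenceMatrix tail head v₀)ᵀ).submatrix
            g g).det := by
  rw [det_eq_sum_neg_one_pow_mul_det_one_sub_submatrix (Matrix.submatrix _ g g), mul_sum,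
    ← sum_neg_one_pow_mul_card_filter_forall_not _ fun i T => g i ∈ T]
  refine sum_congr rfl fun A _ => ?_
  have hsub (K : Matrix E E ℝ) : (1 - K.submatrix g g).submatrix (Subtype.val : A → ι)
      (Subtype.val : A → ι) = (1 - K).submatrix (g ∘ Subtype.val) (g ∘ Subtype.val) := by
    ext i j
    simp only [submatrix_apply, Matrix.sub_apply, one_apply, Function.comp_apply, hg.eq_iff]
  rw [mul_left_comm, hsub, ← det_transpose_mul_diagonal_mul_of_injective _
    (hg.comp Subtype.val_injective) hG,
    ← card_filter_spanningTrees_forall_notMem hsimple]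
  simp only [Function.comp_apply, Subtype.forall]
  congr!

end Graph

/-- Burton–Pemantle, finite form: let `(V, E)` be a finite connected
(multi)graph with a fixed orientation `tail, head : E → V` of its edges, let
`a(v) ∈ ℝ^E` be the star vectors `a_e(v) = 1/−1/0` according to whether `v` is the
tail/head of `e`/neither, and let `K` be the transfer current matrix, i.e. the matrix of
the orthogonal projection of `ℝ^E` onto the star space `Span{a(v)}` in the standard
orthonormal basis.  Then for distinct edges `e₁,…,e_n`, the probability that a uniformly
random spanning tree contains all of them equals `det[K(e_i,e_j)]`.  (A spanning tree is an
edge subset `T` which connects every pair of vertices and has `|V| − 1` edges.) -/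
theorem burton_pemantle {V E : Type*} [Fintype V] [Fintype E] [DecidableEq E]
    (tail head : E → V) (hsimple : ∀ e, tail e ≠ head e)
    (hconn : ∀ u v : V, Relation.ReflTransGen
      (fun p q => ∃ e : E, (tail e = p ∧ head e = q) ∨ (tail e = q ∧ head e = p)) u v)
    (a : V → EuclideanSpace ℝ E)
    (ha : ∀ v e, a v e = if tail e = v then 1 else if head e = v then -1 else 0)
    (K : Matrix E E ℝ)
    (hK : ∀ e f, K e f =
      inner ℝ ((Submodule.orthogonalProjectionOnto (Submodule.span ℝ (Set.range a))
          (EuclideanSpace.single f 1) : EuclideanSpace ℝ E)) (EuclideanSpace.single e 1))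
    (ST : Finset (Finset E))
    (hST : ST = Finset.univ.filter (fun T : Finset E =>
      (∀ u v : V, Relation.ReflTransGen
        (fun p q => ∃ e ∈ T, (tail e = p ∧ head e = q) ∨ (tail e = q ∧ head e = p)) u v)
      ∧ T.card = Fintype.card V - 1))
    (n : ℕ) (e : Fin n → E) (he : Function.Injective e) :
    ((ST.filter fun T => ∀ i, e i ∈ T).card : ℝ) / (ST.card : ℝ)
      = Matrix.det (Matrix.of fun i j : Fin n => K (e i) (e j)) := by
  obtain rfl : ST = spanningTrees tail head := by
    rw [hST, spanningTrees]
    congr!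
  rcases isEmpty_or_nonempty V with hV | ⟨⟨v₀⟩⟩
  · have : IsEmpty (Fin n) := Function.isEmpty (tail ∘ e)
    have hempty : ∅ ∈ spanningTrees tail head := by
      simp [spanningTrees, Connects, Fintype.card_eq_zero]
    rw [filter_true_of_mem fun T _ i => isEmptyElim i, det_isEmpty,
      div_self (Nat.cast_ne_zero.mpr (card_ne_zero_of_mem hempty))]
  set B := reducedIncidenceMatrix tail head v₀
  have hG : IsUnit (Bᵀ * B).det := isUnit_det_reducedIncidenceMatrix_gram hsimple
    fun u v => Relation.ReflTransGen.mono (fun _ _ ⟨f, hf⟩ => ⟨f, mem_univ f, hf⟩) u v (hconn u v)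
  obtain rfl : K = B * (Bᵀ * B)⁻¹ * Bᵀ := by
    ext f f'
    rw [hK, ← Submodule.starProjection_apply,
      span_range_eq_span_reducedIncidenceMatrix_columns hsimple ha, starProjection_span_columns B hG]
    simp [EuclideanSpace.inner_single_right]
  rw [card_spanningTrees_eq_det hsimple v₀, div_eq_iff hG.ne_zero, mul_comm]
  convert card_filter_spanningTrees_forall_mem hsimple hG he
  rfl
end

section
/- The operators α_n = Σ_{k∈ℤ'} ψ_{k−n} ψ*_k (n ∈ ℤ \ {0}) acting on the charged fermionic Fock space satisfy the Heisenberg relations α_m α_n − α_n α_m = m δ_{n,−m} for all m, n ∈ ℤ \ {0}. -/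
noncomputable section
open scoped Classical

/-- A subset `S ⊂ ℤ' = ℤ + ½` (encoded by `k ↦ k + ½`, so that `ℤ'_{<0}` corresponds to
`{k | k < 0}`) is admissible if both `S \ ℤ'_{<0}` and `ℤ'_{<0} \ S` are finite. -/
def Admissible (S : Set ℤ) : Prop :=
  (S \ {k : ℤ | k < 0}).Finite ∧ ({k : ℤ | k < 0} \ S).Finite

/-- Index set for the basis `v_S` of the fermionic Fock space `Λ^{∞/2}V`. -/
def FockIndex : Type := {S : Set ℤ // Admissible S}

/-- The fermionic Fock space `Λ^{∞/2}V`, realized with its orthonormal basis `{v_S}`. -/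
abbrev Fock : Type := FockIndex →₀ ℝ

/-- The basis vector `v_S = s₁ ∧ s₂ ∧ ⋯` for `S = {s₁ > s₂ > ⋯}`. -/
def vbasis (S : FockIndex) : Fock := Finsupp.single S 1

lemma finite_gt (S : FockIndex) (k : ℤ) : (S.1 ∩ Set.Ioi k).Finite := by
  apply Set.Finite.subset (S.2.1.union (Set.finite_Icc k 0))
  rintro s ⟨hs, _⟩
  rcases lt_or_ge s 0 with h | h
  · exact Or.inr ⟨le_of_lt (by simpa using ‹s ∈ Set.Ioi k›), le_of_lt h⟩
  · exact Or.inl ⟨hs, not_lt.mpr h⟩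

/-- The number of elements of `S` greater than `k`; the sign of moving `k` into `v_S`
is `(−1)` to this power. -/
def signCount (S : FockIndex) (k : ℤ) : ℕ := (finite_gt S k).toFinset.card

lemma adm_insert (S : FockIndex) (k : ℤ) : Admissible (insert k S.1) := by
  constructor
  · apply Set.Finite.subset (S.2.1.union (Set.finite_singleton k))
    rintro s ⟨hs, hneg⟩
    rcases hs with rfl | hs
    · exact Or.inr rfl
    · exact Or.inl ⟨hs, hneg⟩
  · exact S.2.2.subset (by intro s hs; exact ⟨hs.1, fun h => hs.2 (Set.mem_insert_iff.mpr (Or.inr h))⟩)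

lemma adm_erase (S : FockIndex) (k : ℤ) : Admissible (S.1 \ {k}) := by
  constructor
  · exact S.2.1.subset (by intro s hs; exact ⟨hs.1.1, hs.2⟩)
  · apply Set.Finite.subset (S.2.2.union (Set.finite_singleton k))
    rintro s ⟨hneg, hs⟩
    by_cases h : s = k
    · exact Or.inr h
    · exact Or.inl ⟨hneg, fun hS => hs ⟨hS, h⟩⟩

/-- The creation operator `ψ_k` : exterior multiplication by `k`,
`ψ_k v_S = (−1)^{#{s ∈ S : s > k}} v_{S ∪ {k}}` if `k ∉ S`, and `0` otherwise. -/
def psi (k : ℤ) : Fock →ₗ[ℝ] Fock :=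
  Finsupp.lift Fock ℝ FockIndex fun S =>
    if k ∈ S.1 then 0
    else ((-1 : ℝ) ^ signCount S k) • vbasis ⟨insert k S.1, adm_insert S k⟩

/-- The annihilation operator `ψ*_k`, the adjoint of `ψ_k` with respect to the inner
product making `{v_S}` orthonormal:
`ψ*_k v_S = (−1)^{#{s ∈ S : s > k}} v_{S \ {k}}` if `k ∈ S`, and `0` otherwise. -/
def psiStar (k : ℤ) : Fock →ₗ[ℝ] Fock :=
  Finsupp.lift Fock ℝ FockIndex fun S =>
    if k ∈ S.1 then ((-1 : ℝ) ^ signCount S k) • vbasis ⟨S.1 \ {k}, adm_erase S k⟩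
    else 0
/-- A finite set of `k` containing all indices for which `ψ_{k−n} ψ*_k v_S ≠ 0`
(i.e. all `k ∈ S` with `k − n ∉ S`): such a `k` lies in `S \ ℤ'_{<0}` if `k ≥ 0`, in
`(ℤ'_{<0} \ S) + n` if `k < 0` and `k − n < 0`, and in `[n, −1]` if `k < 0 ≤ k − n`. -/
def contribSet (S : FockIndex) (n : ℤ) : Finset ℤ :=
  S.2.1.toFinset ∪ S.2.2.toFinset.image (· + n) ∪ Finset.Icc n (-1)

/-- The operator `α_n = ∑_{k ∈ ℤ'} ψ_{k−n} ψ*_k` (`n ≠ 0`); on each basis vector only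
finitely many terms act nontrivially, so it is defined by the finite sum over
`contribSet S n` (all other terms vanish). -/
def alpha (n : ℤ) : Fock →ₗ[ℝ] Fock :=
  Finsupp.lift Fock ℝ FockIndex fun S =>
    ∑ k ∈ contribSet S n, psi (k - n) (psiStar k (vbasis S))

/-!
By the canonical anticommutation relations the bilinears `ψ_a ψ*_b` satisfy
`[ψ_a ψ*_b, ψ_c ψ*_d] = δ_{bc} ψ_a ψ*_d − δ_{ad} ψ_c ψ*_b`. Fix a basis vector `v_S`, with `S`
equal to the vacuum `ℤ'_{<0}` outside a window `[-N, N]`. Every `ψ_{k−n} ψ*_k` with `|k|` large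
kills `v_S`, and moving one particle keeps the window of size `N + |n|`, so on `v_S` both
`α_m α_n` and `α_n α_m` may be computed with the finite truncations `∑_{|k| ≤ M} ψ_{k−n} ψ*_k`.
For these the bilinear relation gives `∑ ψ_{k−n−m} ψ*_k` over the `k` with `|k|, |k − n| ≤ M`,
minus the same sum over the `k` with `|k|, |k − m| ≤ M`. If `m + n ≠ 0` the terms outside the
common range vanish on `v_S`. If `n = −m` all terms are number operators `ψ_k ψ*_k`, and the two
ranges differ by `|m|` sites deep in the filled sea (each contributing `1`) and `|m|` sites far
above it (each contributing `0`); this gives the central term `m`.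
-/

namespace FockIndex

def insert (S : FockIndex) (a : ℤ) : FockIndex := ⟨Insert.insert a S.1, adm_insert S a⟩

def erase (S : FockIndex) (a : ℤ) : FockIndex := ⟨S.1 \ {a}, adm_erase S a⟩

variable {S : FockIndex} {a b x : ℤ}

@[simp] lemma mem_insert : x ∈ (S.insert a).1 ↔ x = a ∨ x ∈ S.1 := Set.mem_insert_iff

@[simp] lemma mem_erase : x ∈ (S.erase a).1 ↔ x ∈ S.1 ∧ x ≠ a := Set.mem_sdiff_singleton

lemma erase_insert (ha : a ∉ S.1) : (S.insert a).erase a = S :=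
  Subtype.ext (Set.insert_sdiff_self_of_notMem ha)

lemma insert_erase (ha : a ∈ S.1) : (S.erase a).insert a = S :=
  Subtype.ext (Set.insert_sdiff_singleton.trans (Set.insert_eq_of_mem ha))

lemma insert_comm (a b : ℤ) : (S.insert a).insert b = (S.insert b).insert a :=
  Subtype.ext (Set.insert_comm b a S.1)

lemma erase_comm (a b : ℤ) : (S.erase a).erase b = (S.erase b).erase a :=
  Subtype.ext Set.sdiff_sdiff_comm

lemma insert_erase_comm (hab : a ≠ b) : (S.erase b).insert a = (S.insert a).erase b :=
  Subtype.ext (Set.insert_sdiff_singleton_comm hab S.1)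

end FockIndex

lemma signCount_eq_ncard (S : FockIndex) (k : ℤ) : signCount S k = (S.1 ∩ Set.Ioi k).ncard :=
  (Set.ncard_eq_toFinset_card _ (finite_gt S k)).symm

lemma signCount_erase {S : FockIndex} {a : ℤ} (ha : a ∈ S.1) (b : ℤ) :
    signCount S b = signCount (S.erase a) b + if b < a then 1 else 0 := by
  have hdiff : (S.erase a).1 ∩ Set.Ioi b = (S.1 ∩ Set.Ioi b) \ {a} :=
    Set.sdiff_inter_right_comm _ _ _
  rw [signCount_eq_ncard, signCount_eq_ncard, hdiff]
  split_ifs with hb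
  · exact (Set.ncard_sdiff_singleton_add_one (show a ∈ S.1 ∩ Set.Ioi b from ⟨ha, hb⟩)
      (finite_gt S b)).symm
  · rw [Set.sdiff_singleton_eq_self fun h => hb h.2, add_zero]

lemma signCount_insert {S : FockIndex} {a : ℤ} (ha : a ∉ S.1) (b : ℤ) :
    signCount (S.insert a) b = signCount S b + if b < a then 1 else 0 := by
  rw [signCount_erase (S.mem_insert.mpr (Or.inl rfl)) b, FockIndex.erase_insert ha]

def wedgeSign (S : FockIndex) (k : ℤ) : ℝ := (-1) ^ signCount S k

lemma wedgeSign_mul_self (S : FockIndex) (k : ℤ) : wedgeSign S k * wedgeSign S k = 1 := by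
  rw [wedgeSign, ← pow_add, ← two_mul, pow_mul, neg_one_sq, one_pow]

lemma wedgeSign_erase {S : FockIndex} {a : ℤ} (ha : a ∈ S.1) (b : ℤ) :
    wedgeSign (S.erase a) b = if b < a then -wedgeSign S b else wedgeSign S b := by
  rw [wedgeSign, wedgeSign, signCount_erase ha b]
  split_ifs <;> simp [pow_succ]

lemma wedgeSign_insert {S : FockIndex} {a : ℤ} (ha : a ∉ S.1) (b : ℤ) :
    wedgeSign (S.insert a) b = if b < a then -wedgeSign S b else wedgeSign S b := by
  rw [wedgeSign, wedgeSign, signCount_insert ha b]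
  split_ifs <;> simp [pow_succ]

lemma lift_vbasis (f : FockIndex → Fock) (S : FockIndex) :
    Finsupp.lift Fock ℝ FockIndex f (vbasis S) = f S := by
  simp [vbasis]

lemma Fock.lhom_ext {f g : Module.End ℝ Fock} (h : ∀ S, f (vbasis S) = g (vbasis S)) : f = g :=
  Finsupp.basisSingleOne.ext h

section Basis

variable {S : FockIndex} {k : ℤ}

lemma psi_vbasis_of_mem (h : k ∈ S.1) : psi k (vbasis S) = 0 := by
  rw [psi, lift_vbasis, if_pos h]

lemma psi_vbasis_of_notMem (h : k ∉ S.1) :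
    psi k (vbasis S) = wedgeSign S k • vbasis (S.insert k) := by
  rw [psi, lift_vbasis, if_neg h]; rfl

lemma psiStar_vbasis_of_mem (h : k ∈ S.1) :
    psiStar k (vbasis S) = wedgeSign S k • vbasis (S.erase k) := by
  rw [psiStar, lift_vbasis, if_pos h]; rfl

lemma psiStar_vbasis_of_notMem (h : k ∉ S.1) : psiStar k (vbasis S) = 0 := by
  rw [psiStar, lift_vbasis, if_neg h]

end Basis

section CAR

variable {S : FockIndex} {a c : ℤ}

open FockIndex

lemma psiStar_vbasis_insert_self (ha : a ∉ S.1) :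
    psiStar a (vbasis (S.insert a)) = wedgeSign S a • vbasis S := by
  rw [psiStar_vbasis_of_mem (mem_insert.mpr (Or.inl rfl)), erase_insert ha,
    wedgeSign_insert ha, if_neg (lt_irrefl a)]

lemma psi_vbasis_erase_self (ha : a ∈ S.1) :
    psi a (vbasis (S.erase a)) = wedgeSign S a • vbasis S := by
  rw [psi_vbasis_of_notMem (by simp), insert_erase ha, wedgeSign_erase ha, if_neg (lt_irrefl a)]

lemma psi_psi_vbasis_eq_zero (h : c ∈ (S.insert a).1) : psi c (psi a (vbasis S)) = 0 := by
  by_cases ha : a ∈ S.1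
  · rw [psi_vbasis_of_mem ha, map_zero]
  · rw [psi_vbasis_of_notMem ha, map_smul, psi_vbasis_of_mem h, smul_zero]

lemma psiStar_psiStar_vbasis_eq_zero (h : c ∉ (S.erase a).1) :
    psiStar c (psiStar a (vbasis S)) = 0 := by
  by_cases ha : a ∈ S.1
  · rw [psiStar_vbasis_of_mem ha, map_smul, psiStar_vbasis_of_notMem h, smul_zero]
  · rw [psiStar_vbasis_of_notMem ha, map_zero]

lemma psi_mul_psi_add (a c : ℤ) : psi a * psi c + psi c * psi a = 0 := by
  refine Fock.lhom_ext fun S => ?_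
  simp only [LinearMap.add_apply, Module.End.mul_apply, LinearMap.zero_apply]
  by_cases hac : a = c
  · subst hac
    rw [psi_psi_vbasis_eq_zero (by simp), add_zero]
  by_cases ha : a ∈ S.1
  · rw [psi_vbasis_of_mem ha, map_zero, add_zero, psi_psi_vbasis_eq_zero (by simp [ha])]
  by_cases hc : c ∈ S.1
  · rw [psi_vbasis_of_mem hc, map_zero, zero_add, psi_psi_vbasis_eq_zero (by simp [hc])]
  rw [psi_vbasis_of_notMem ha, psi_vbasis_of_notMem hc, map_smul, map_smul,
    psi_vbasis_of_notMem (by simp [ha, hac]), psi_vbasis_of_notMem (by simp [hc, Ne.symm hac]),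
    insert_comm, smul_smul, smul_smul, ← add_smul, wedgeSign_insert ha, wedgeSign_insert hc]
  -- exactly one of `a < c`, `c < a` holds, so the two orders pick up opposite signs
  convert zero_smul ℝ _
  split_ifs <;> first | omega | ring

lemma psiStar_mul_psiStar_add (a c : ℤ) : psiStar a * psiStar c + psiStar c * psiStar a = 0 := by
  refine Fock.lhom_ext fun S => ?_
  simp only [LinearMap.add_apply, Module.End.mul_apply, LinearMap.zero_apply]
  by_cases hac : a = c
  · subst hac
    rw [psiStar_psiStar_vbasis_eq_zero (by simp), add_zero]
  rcases em' (a ∈ S.1) with ha | ha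
  · rw [psiStar_vbasis_of_notMem ha, map_zero, add_zero,
      psiStar_psiStar_vbasis_eq_zero (by simp [ha])]
  rcases em' (c ∈ S.1) with hc | hc
  · rw [psiStar_vbasis_of_notMem hc, map_zero, zero_add,
      psiStar_psiStar_vbasis_eq_zero (by simp [hc])]
  rw [psiStar_vbasis_of_mem ha, psiStar_vbasis_of_mem hc, map_smul, map_smul,
    psiStar_vbasis_of_mem (by simp [ha, hac]), psiStar_vbasis_of_mem (by simp [hc, Ne.symm hac]),
    erase_comm, smul_smul, smul_smul, ← add_smul, wedgeSign_erase ha, wedgeSign_erase hc]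
  convert zero_smul ℝ _
  split_ifs <;> first | omega | ring

lemma psi_mul_psiStar_add (a c : ℤ) :
    psi a * psiStar c + psiStar c * psi a = if a = c then 1 else 0 := by
  refine Fock.lhom_ext fun S => ?_
  simp only [LinearMap.add_apply, Module.End.mul_apply]
  by_cases hac : a = c
  · subst hac
    rw [if_pos rfl, Module.End.one_apply]
    by_cases ha : a ∈ S.1
    · rw [psi_vbasis_of_mem ha, map_zero, add_zero, psiStar_vbasis_of_mem ha, map_smul,
        psi_vbasis_erase_self ha, smul_smul, wedgeSign_mul_self, one_smul]
    · rw [psiStar_vbasis_of_notMem ha, map_zero, zero_add, psi_vbasis_of_notMem ha, map_smul,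
        psiStar_vbasis_insert_self ha, smul_smul, wedgeSign_mul_self, one_smul]
  rw [if_neg hac, LinearMap.zero_apply]
  rcases em' (c ∈ S.1) with hc | hc
  · rw [psiStar_vbasis_of_notMem hc, map_zero, zero_add]
    by_cases ha : a ∈ S.1
    · rw [psi_vbasis_of_mem ha, map_zero]
    · rw [psi_vbasis_of_notMem ha, map_smul, psiStar_vbasis_of_notMem (by simp [hc, Ne.symm hac]),
        smul_zero]
  by_cases ha : a ∈ S.1
  · rw [psi_vbasis_of_mem ha, map_zero, add_zero, psiStar_vbasis_of_mem hc, map_smul,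
      psi_vbasis_of_mem (by simp [ha, hac]), smul_zero]
  rw [psiStar_vbasis_of_mem hc, psi_vbasis_of_notMem ha, map_smul, map_smul,
    psi_vbasis_of_notMem (by simp [ha]), psiStar_vbasis_of_mem (by simp [hc]),
    insert_erase_comm hac, smul_smul, smul_smul, ← add_smul, wedgeSign_erase hc,
    wedgeSign_insert ha]
  convert zero_smul ℝ _
  split_ifs <;> first | omega | ring

lemma psi_psiStar_vbasis_eq_zero (hac : a ≠ c) (h : c ∈ S.1 → a ∈ S.1) :
    psi a (psiStar c (vbasis S)) = 0 := by
  by_cases hc : c ∈ S.1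
  · rw [psiStar_vbasis_of_mem hc, map_smul, psi_vbasis_of_mem (by simp [h hc, hac]), smul_zero]
  · rw [psiStar_vbasis_of_notMem hc, map_zero]

lemma psi_psiStar_vbasis_self (a : ℤ) (S : FockIndex) :
    psi a (psiStar a (vbasis S)) = if a ∈ S.1 then vbasis S else 0 := by
  split_ifs with ha
  · rw [psiStar_vbasis_of_mem ha, map_smul, psi_vbasis_erase_self ha, smul_smul,
      wedgeSign_mul_self, one_smul]
  · rw [psiStar_vbasis_of_notMem ha, map_zero]

end CAR

theorem mul_mul_sub_mul_mul_of_anticomm {R : Type*} [Ring R] {A B C D x y : R}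
    (hAC : A * C + C * A = 0) (hBD : B * D + D * B = 0)
    (hCB : C * B + B * C = x) (hAD : A * D + D * A = y) :
    A * B * (C * D) - C * D * (A * B) = A * x * D - C * y * B := by
  rw [← hCB, ← hAD]
  calc A * B * (C * D) - C * D * (A * B)
      = A * (C * B + B * C) * D - C * (A * D + D * A) * B - A * C * (B * D)
          + C * A * (D * B) := by noncomm_ring
    _ = A * (C * B + B * C) * D - C * (A * D + D * A) * B := by
        rw [eq_neg_of_add_eq_zero_left hAC, eq_neg_of_add_eq_zero_left hBD]; noncomm_ring

lemma commutator_psi_mul_psiStar (a b c d : ℤ) :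
    psi a * psiStar b * (psi c * psiStar d) - psi c * psiStar d * (psi a * psiStar b)
      = (if c = b then psi a * psiStar d else 0) - (if a = d then psi c * psiStar b else 0) := by
  rw [mul_mul_sub_mul_mul_of_anticomm (R := Module.End ℝ Fock) (psi_mul_psi_add a c)
    (psiStar_mul_psiStar_add b d) (psi_mul_psiStar_add c b) (psi_mul_psiStar_add a d)]
  simp only [mul_ite, ite_mul, mul_one, mul_zero, zero_mul]

lemma commutator_psi_mul_psiStar_apply (a b c d : ℤ) (x : Fock) :
    psi a (psiStar b (psi c (psiStar d x))) - psi c (psiStar d (psi a (psiStar b x)))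
      = (if c = b then psi a (psiStar d x) else 0)
        - (if a = d then psi c (psiStar b x) else 0) := by
  have h := LinearMap.congr_fun (commutator_psi_mul_psiStar a b c d) x
  simp only [LinearMap.sub_apply, Module.End.mul_apply] at h
  rw [h]
  split_ifs <;> rfl

def alphaTrunc (T : Finset ℤ) (n : ℤ) : Module.End ℝ Fock :=
  ∑ k ∈ T, psi (k - n) * psiStar k

lemma alphaTrunc_apply (T : Finset ℤ) (n : ℤ) (x : Fock) :
    alphaTrunc T n x = ∑ k ∈ T, psi (k - n) (psiStar k x) := by
  simp [alphaTrunc]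

lemma commutator_alphaTrunc_apply (T : Finset ℤ) (m n : ℤ) (x : Fock) :
    alphaTrunc T m (alphaTrunc T n x) - alphaTrunc T n (alphaTrunc T m x)
      = ∑ k ∈ T with k - n ∈ T, psi (k - n - m) (psiStar k x)
        - ∑ k ∈ T with k - m ∈ T, psi (k - m - n) (psiStar k x) := by
  simp only [alphaTrunc_apply, map_sum]
  rw [Finset.sum_comm, ← Finset.sum_sub_distrib]
  simp only [← Finset.sum_sub_distrib, commutator_psi_mul_psiStar_apply]
  simp only [Finset.sum_sub_distrib]
  rw [Finset.sum_comm]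
  simp only [Finset.sum_ite_eq, Finset.sum_filter]

def VacuumOutside (S : FockIndex) (N : ℤ) : Prop :=
  (∀ k < -N, k ∈ S.1) ∧ ∀ k, N < k → k ∉ S.1

lemma exists_vacuumOutside (S : FockIndex) : ∃ N, 0 ≤ N ∧ VacuumOutside S N := by
  obtain ⟨u, hu⟩ := S.2.1.bddAbove
  obtain ⟨l, hl⟩ := S.2.2.bddBelow
  refine ⟨max 0 (max u (-l)), le_max_left _ _, fun k hk => ?_, fun k hk hkS => ?_⟩
  · by_contra hkS
    have : l ≤ k := hl ⟨show k < 0 by omega, hkS⟩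
    omega
  · have : k ≤ u := hu ⟨hkS, show ¬k < 0 by omega⟩
    omega

section VacuumOutside

variable {S : FockIndex} {N a b : ℤ}

lemma VacuumOutside.mono (hS : VacuumOutside S N) {N' : ℤ} (h : N ≤ N') : VacuumOutside S N' :=
  ⟨fun k hk => hS.1 k (by omega), fun k hk => hS.2 k (by omega)⟩

lemma VacuumOutside.psi_psiStar_eq_zero_of_gt (hS : VacuumOutside S N) (hb : N < b) :
    psi a (psiStar b (vbasis S)) = 0 := by
  rw [psiStar_vbasis_of_notMem (hS.2 b hb), map_zero]

lemma VacuumOutside.psi_psiStar_eq_zero_of_lt (hS : VacuumOutside S N) (ha : a < -N)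
    (hab : a ≠ b) : psi a (psiStar b (vbasis S)) = 0 :=
  psi_psiStar_vbasis_eq_zero hab fun _ => hS.1 a ha

lemma VacuumOutside.exists_psi_psiStar_eq_smul (hS : VacuumOutside S N) (a b : ℤ) :
    ∃ (c : ℝ) (S' : FockIndex), VacuumOutside S' (N + |a - b|) ∧
      psi a (psiStar b (vbasis S)) = c • vbasis S' := by
  have hmono := hS.mono (le_add_of_nonneg_right (abs_nonneg (a - b)))
  by_cases hb : b ∈ S.1
  swap
  · exact ⟨0, S, hmono, by rw [psiStar_vbasis_of_notMem hb, map_zero, zero_smul]⟩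
  by_cases ha : a ∈ (S.erase b).1
  · exact ⟨0, S, hmono, by
      rw [psiStar_vbasis_of_mem hb, map_smul, psi_vbasis_of_mem ha, smul_zero, zero_smul]⟩
  refine ⟨wedgeSign S b * wedgeSign (S.erase b) a, (S.erase b).insert a, ⟨fun k hk => ?_,
    fun k hk => ?_⟩, by rw [psiStar_vbasis_of_mem hb, map_smul, psi_vbasis_of_notMem ha, smul_smul]⟩
  all_goals have := le_abs_self (a - b); have := neg_abs_le (a - b)
  · rw [FockIndex.mem_insert, FockIndex.mem_erase]
    by_cases hkb : k = b
    · subst hkb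
      refine Or.inl (by_contra fun hka => ?_)
      have haS : a ∉ S.1 := fun h => ha (by simp [h, Ne.symm hka])
      exact haS (hS.1 a (by omega))
    · exact Or.inr ⟨hS.1 k (by omega), hkb⟩
  · have hbN : b ≤ N := by
      by_contra h
      exact hS.2 b (by omega) hb
    simp only [FockIndex.mem_insert, FockIndex.mem_erase, not_or, not_and_or]
    exact ⟨by omega, Or.inl (hS.2 k (by omega))⟩

end VacuumOutside

lemma mem_contribSet {S : FockIndex} {k n : ℤ} (h1 : k ∈ S.1) (h2 : k - n ∉ S.1) :
    k ∈ contribSet S n := by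
  simp only [contribSet, Finset.mem_union, Set.Finite.mem_toFinset, Set.mem_sdiff,
    Set.mem_ofPred_eq, Finset.mem_image, Finset.mem_Icc]
  rcases le_or_gt 0 k with hk | hk
  · exact Or.inl (Or.inl ⟨h1, by omega⟩)
  · rcases lt_or_ge (k - n) 0 with hkn | hkn
    · exact Or.inl (Or.inr ⟨k - n, ⟨hkn, h2⟩, by omega⟩)
    · exact Or.inr ⟨by omega, by omega⟩

lemma alpha_vbasis_eq_alphaTrunc {S : FockIndex} {N M n : ℤ} (hS : VacuumOutside S N)
    (hn : n ≠ 0) (hM : N + |n| ≤ M) :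
    alpha n (vbasis S) = alphaTrunc (Finset.Icc (-M) M) n (vbasis S) := by
  have := le_abs_self n; have := neg_abs_le n
  have h_contrib : ∀ k ∉ contribSet S n, psi (k - n) (psiStar k (vbasis S)) = 0 :=
    fun k hk => psi_psiStar_vbasis_eq_zero (by omega) fun hkS =>
      by_contra fun hkn => hk (mem_contribSet hkS hkn)
  have h_window : ∀ k ∉ Finset.Icc (-M) M, psi (k - n) (psiStar k (vbasis S)) = 0 := by
    intro k hk
    rw [Finset.mem_Icc, not_and_or, not_le, not_le] at hk
    rcases hk with hk | hk
    · exact hS.psi_psiStar_eq_zero_of_lt (by omega) (by omega)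
    · exact hS.psi_psiStar_eq_zero_of_gt (by omega)
  rw [alpha, lift_vbasis, alphaTrunc_apply,
    Finset.sum_subset Finset.subset_union_left fun k _ hk => h_contrib k hk,
    ← Finset.sum_subset Finset.subset_union_right fun k _ hk => h_window k hk]

lemma alpha_alpha_vbasis_eq_alphaTrunc {S : FockIndex} {N M m n : ℤ} (hS : VacuumOutside S N)
    (hm : m ≠ 0) (hn : n ≠ 0) (hM : N + |n| + |m| ≤ M) :
    alpha m (alpha n (vbasis S))
      = alphaTrunc (Finset.Icc (-M) M) m (alphaTrunc (Finset.Icc (-M) M) n (vbasis S)) := by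
  rw [alpha_vbasis_eq_alphaTrunc hS hn (by linarith [abs_nonneg m]), alphaTrunc_apply, map_sum,
    map_sum]
  refine Finset.sum_congr rfl fun k _ => ?_
  obtain ⟨c, S', hS', h⟩ := hS.exists_psi_psiStar_eq_smul (k - n) k
  rw [h, map_smul, map_smul, alpha_vbasis_eq_alphaTrunc hS' hm (by simpa using hM)]

section Commutator

open Finset

variable {S : FockIndex} {N M : ℤ}

lemma sum_psi_psiStar_vbasis_self (A : Finset ℤ) (S : FockIndex) :
    ∑ k ∈ A, psi k (psiStar k (vbasis S)) = (#{k ∈ A | k ∈ S.1} : ℝ) • vbasis S := by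
  simp [psi_psiStar_vbasis_self, sum_ite, Nat.cast_smul_eq_nsmul]

lemma VacuumOutside.card_filter_mem_Icc (hS : VacuumOutside S N) (hN : 0 ≤ N) {a b : ℤ}
    (ha : a ≤ -N) (hb : N ≤ b) :
    (#{k ∈ Icc a b | k ∈ S.1} : ℤ) = #{k ∈ Icc (-N) N | k ∈ S.1} + (-N - a) := by
  have hsplit : {k ∈ Icc a b | k ∈ S.1}
      = Ico a (-N) ∪ {k ∈ Icc (-N) N | k ∈ S.1} := by
    ext k
    simp only [mem_union, mem_filter, mem_Icc, mem_Ico]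
    constructor
    · rintro ⟨⟨hak, hkb⟩, hkS⟩
      by_cases hkN : k < -N
      · exact Or.inl ⟨hak, hkN⟩
      · exact Or.inr ⟨⟨by omega, not_lt.mp fun h => hS.2 k h hkS⟩, hkS⟩
    · rintro (⟨hak, hkN⟩ | ⟨⟨hNk, hkN⟩, hkS⟩)
      · exact ⟨⟨hak, by omega⟩, hS.1 k hkN⟩
      · exact ⟨⟨by omega, by omega⟩, hkS⟩
  have hdisj : Disjoint (Ico a (-N)) {k ∈ Icc (-N) N | k ∈ S.1} := by
    simp only [disjoint_left, mem_Ico, mem_filter, mem_Icc]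
    omega
  rw [hsplit, card_union_of_disjoint hdisj, Int.card_Ico]
  omega

lemma filter_sub_mem_Icc (a b j : ℤ) :
    {k ∈ Icc a b | k - j ∈ Icc a b} = Icc (max a (a + j)) (min b (b + j)) := by
  ext k
  simp only [mem_filter, mem_Icc]
  omega

lemma VacuumOutside.commutator_alphaTrunc_neg_apply (hS : VacuumOutside S N) (hN : 0 ≤ N)
    {m : ℤ} (hM : N + |m| ≤ M) :
    alphaTrunc (Icc (-M) M) m (alphaTrunc (Icc (-M) M) (-m) (vbasis S))
      - alphaTrunc (Icc (-M) M) (-m) (alphaTrunc (Icc (-M) M) m (vbasis S))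
      = (m : ℝ) • vbasis S := by
  have := le_abs_self m; have := neg_abs_le m
  rw [commutator_alphaTrunc_apply, filter_sub_mem_Icc, filter_sub_mem_Icc]
  simp only [sub_neg_eq_add, add_sub_cancel_right, sub_add_cancel, sum_psi_psiStar_vbasis_self,
    ← sub_smul]
  congr 1
  have h₁ := hS.card_filter_mem_Icc hN (a := max (-M) (-M + -m)) (b := min M (M + -m))
    (by omega) (by omega)
  have h₂ := hS.card_filter_mem_Icc hN (a := max (-M) (-M + m)) (b := min M (M + m))
    (by omega) (by omega)
  have hcount : (#{k ∈ Icc (max (-M) (-M + -m)) (min M (M + -m)) | k ∈ S.1} : ℤ)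
      - #{k ∈ Icc (max (-M) (-M + m)) (min M (M + m)) | k ∈ S.1} = m := by
    omega
  exact_mod_cast hcount

lemma VacuumOutside.sum_filter_sub_mem_Icc (hS : VacuumOutside S N) {m n : ℤ} (hmn : n + m ≠ 0)
    (hM : N + |m| + |n| ≤ M) :
    ∑ k ∈ Icc (-M) M with k - n ∈ Icc (-M) M, psi (k - n - m) (psiStar k (vbasis S))
      = ∑ k ∈ Icc (-M) M, psi (k - (n + m)) (psiStar k (vbasis S)) := by
  have := le_abs_self m; have := neg_abs_le m; have := le_abs_self n; have := neg_abs_le n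
  simp_rw [sub_sub]
  refine sum_filter_of_ne fun k hk hne => ?_
  rw [mem_Icc] at hk ⊢
  by_contra hkn
  rcases not_and_or.mp hkn with hlow | hhigh
  · exact hne (hS.psi_psiStar_eq_zero_of_lt (by omega) (by omega))
  · exact hne (hS.psi_psiStar_eq_zero_of_gt (by omega))

lemma VacuumOutside.commutator_alphaTrunc_apply_eq_zero (hS : VacuumOutside S N) {m n : ℤ}
    (hmn : n ≠ -m) (hM : N + |m| + |n| ≤ M) :
    alphaTrunc (Icc (-M) M) m (alphaTrunc (Icc (-M) M) n (vbasis S))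
      - alphaTrunc (Icc (-M) M) n (alphaTrunc (Icc (-M) M) m (vbasis S)) = 0 := by
  rw [commutator_alphaTrunc_apply, hS.sum_filter_sub_mem_Icc (by omega) hM,
    hS.sum_filter_sub_mem_Icc (by omega) (by omega), add_comm n m, sub_self]

end Commutator

/-- the operators `α_n` satisfy the Heisenberg commutation relations
`α_m α_n − α_n α_m = m δ_{n,−m}` for `m, n ∈ ℤ \ {0}`. -/
theorem alpha_heisenberg (m n : ℤ) (hm : m ≠ 0) (hn : n ≠ 0) :
    alpha m ∘ₗ alpha n - alpha n ∘ₗ alpha m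
      = if n = -m then (m : ℝ) • (LinearMap.id : Fock →ₗ[ℝ] Fock) else 0 := by
  refine Fock.lhom_ext fun S => ?_
  obtain ⟨N, hN, hS⟩ := exists_vacuumOutside S
  have := abs_nonneg m; have := abs_nonneg n
  rw [LinearMap.sub_apply, LinearMap.comp_apply, LinearMap.comp_apply,
    alpha_alpha_vbasis_eq_alphaTrunc (M := N + |m| + |n|) hS hm hn (by omega),
    alpha_alpha_vbasis_eq_alphaTrunc hS hn hm le_rfl]
  split_ifs with hnm
  · subst hnm
    rw [hS.commutator_alphaTrunc_neg_apply hN (by omega), LinearMap.smul_apply,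
      LinearMap.id_apply]
  · rw [hS.commutator_alphaTrunc_apply_eq_zero hnm le_rfl, LinearMap.zero_apply]

end
end

section
/- The discrete Bessel kernel identity: for x, y ∈ ℤ + 1/2 with x ≠ y and θ > 0, θ·(J_{x−1/2}(2θ)J_{y+1/2}(2θ) − J_{x+1/2}(2θ)J_{y−1/2}(2θ))/(x − y) = Σ_{k ∈ ℤ_{≥0}+1/2} J_{x+k}(2θ) J_{y+k}(2θ), where J_ν is the Bessel function of the first kind. -/
open Filter Topology

/-- `besselJ2 ν θ = J_ν(2θ) = ∑_{m ≥ 0} (−1)^m θ^{2m+ν}/(m!(m+ν)!)` for integer order `ν`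
(terms with `m + ν < 0` vanish, by the convention `1/(m+ν)! = 0`). -/
noncomputable def besselJ2 (ν : ℤ) (θ : ℝ) : ℝ :=
  ∑' m : ℕ, if (m : ℤ) + ν < 0 then 0
    else (-1 : ℝ) ^ m * θ ^ (2 * (m : ℤ) + ν).toNat
        / ((Nat.factorial m : ℝ) * (Nat.factorial ((m : ℤ) + ν).toNat : ℝ))

noncomputable def bterm (θ : ℝ) (ν : ℤ) (m : ℕ) : ℝ :=
  if (m : ℤ) + ν < 0 then 0
    else (-1 : ℝ) ^ m * θ ^ (2 * (m : ℤ) + ν).toNat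
        / ((Nat.factorial m : ℝ) * (Nat.factorial ((m : ℤ) + ν).toNat : ℝ))

lemma bterm_abs_le (θ : ℝ) (ν : ℤ) (m : ℕ) :
    |bterm θ ν m| ≤ (max |θ| 1) ^ ν.natAbs * (((max |θ| 1) ^ 2) ^ m / m.factorial) := by
  set M := max |θ| 1 with hM
  have hM1 : (1:ℝ) ≤ M := le_max_right _ _
  have hM0 : (0:ℝ) ≤ M := by linarith
  have hrhs : (0:ℝ) ≤ M ^ ν.natAbs * ((M ^ 2) ^ m / m.factorial) := by positivity
  rw [bterm]
  split_ifs with h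
  · simpa using hrhs
  · rw [abs_div, abs_mul, abs_pow, abs_pow, abs_neg, abs_one, one_pow, one_mul]
    have hfac : |((m.factorial : ℝ) * (((m:ℤ)+ν).toNat.factorial : ℝ))|
        = (m.factorial : ℝ) * (((m:ℤ)+ν).toNat.factorial : ℝ) := by
      rw [abs_of_nonneg]; positivity
    rw [hfac]
    have h1 : |θ| ^ (2 * (m:ℤ) + ν).toNat ≤ M ^ (ν.natAbs + 2 * m) := by
      calc |θ| ^ (2 * (m:ℤ) + ν).toNat ≤ M ^ (2 * (m:ℤ) + ν).toNat :=
            pow_le_pow_left₀ (abs_nonneg θ) (le_max_left _ _) _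
        _ ≤ M ^ (ν.natAbs + 2 * m) := pow_le_pow_right₀ hM1 (by omega)
    have h2 : (m.factorial : ℝ) ≤ (m.factorial : ℝ) * (((m:ℤ)+ν).toNat.factorial : ℝ) := by
      apply le_mul_of_one_le_right (by positivity)
      exact_mod_cast Nat.one_le_iff_ne_zero.mpr (Nat.factorial_ne_zero (((m:ℤ)+ν).toNat))
    have hm0 : (0:ℝ) < (m.factorial : ℝ) := by positivity
    calc |θ| ^ (2 * (m:ℤ) + ν).toNat / ((m.factorial : ℝ) * (((m:ℤ)+ν).toNat.factorial : ℝ))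
        ≤ M ^ (ν.natAbs + 2 * m) / (m.factorial : ℝ) := by
          apply div_le_div₀ (by positivity) h1 hm0 h2
      _ = M ^ ν.natAbs * ((M ^ 2) ^ m / m.factorial) := by
          rw [pow_add, pow_mul]; ring

lemma bterm_summable (θ : ℝ) (ν : ℤ) : Summable (bterm θ ν) := by
  apply Summable.of_abs
  apply Summable.of_nonneg_of_le (fun m => abs_nonneg _) (bterm_abs_le θ ν)
  exact (Real.summable_pow_div_factorial ((max |θ| 1) ^ 2)).mul_left _

lemma bterm_rec_zero (θ : ℝ) (ν : ℤ) : θ * bterm θ (ν - 1) 0 = ν * bterm θ ν 0 := by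
  simp only [bterm, Nat.cast_zero, zero_add, mul_zero]
  rcases lt_trichotomy ν 0 with h | rfl | h
  · rw [if_pos (by omega), if_pos h]; ring
  · rw [if_pos (by omega)]; simp
  · rw [if_neg (by omega), if_neg (by omega)]
    have hk : ν.toNat = (ν - 1).toNat + 1 := by omega
    have hk2 : (2 * (0:ℤ) + ν).toNat = (2 * (0:ℤ) + (ν - 1)).toNat + 1 := by omega
    have hν : (ν : ℝ) = ((ν - 1).toNat : ℝ) + 1 := by
      have : ν = ((ν - 1).toNat : ℤ) + 1 := by omega
      exact_mod_cast this
    rw [hk, hν]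
    simp only [pow_zero, one_mul, Nat.factorial_zero, Nat.cast_one, Nat.factorial_succ,
      Nat.cast_mul, pow_succ, Nat.cast_add, Nat.cast_one]
    have h1 : ((ν - 1).toNat.factorial : ℝ) ≠ 0 := by positivity
    have h2 : ((ν - 1).toNat : ℝ) + 1 ≠ 0 := by positivity
    field_simp

lemma bterm_rec_succ (θ : ℝ) (ν : ℤ) (n : ℕ) :
    θ * bterm θ (ν - 1) (n + 1) + θ * bterm θ (ν + 1) n = ν * bterm θ ν (n + 1) := by
  simp only [bterm, Nat.cast_add, Nat.cast_one]
  rcases lt_trichotomy ((n:ℤ) + ν + 1) 0 with h | h | h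
  · rw [if_pos (by omega), if_pos (by omega), if_pos (by omega)]; ring
  · -- n + ν + 1 = 0, ν = -(n+1)
    rw [if_pos (by omega), if_neg (by omega), if_neg (by omega)]
    have e1 : ((n:ℤ) + (ν + 1)).toNat = 0 := by omega
    have e2 : ((n:ℤ) + 1 + ν).toNat = 0 := by omega
    have e3 : (2 * (n:ℤ) + (ν + 1)).toNat = n := by omega
    have e4 : (2 * ((n:ℤ) + 1) + ν).toNat = n + 1 := by omega
    have hν : (ν : ℝ) = -((n:ℝ) + 1) := by
      have : ν = -((n:ℤ) + 1) := by omega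
      exact_mod_cast this
    rw [e1, e2, e3, e4, hν]
    simp only [Nat.factorial_zero, Nat.cast_one, mul_one, Nat.factorial_succ, Nat.cast_mul,
      Nat.cast_add, Nat.cast_one]
    have h1 : ((n.factorial : ℝ)) ≠ 0 := by positivity
    have h2 : ((n:ℝ) + 1) ≠ 0 := by positivity
    field_simp
    ring
  · -- n + ν ≥ 0
    rw [if_neg (by omega), if_neg (by omega), if_neg (by omega)]
    set K := ((n:ℤ) + ν).toNat with hK
    have e1 : ((n:ℤ) + 1 + (ν - 1)).toNat = K := by omega
    have e2 : ((n:ℤ) + (ν + 1)).toNat = K + 1 := by omega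
    have e3 : ((n:ℤ) + 1 + ν).toNat = K + 1 := by omega
    set E := (2 * (n:ℤ) + ν + 1).toNat with hE
    have e4 : (2 * ((n:ℤ) + 1) + (ν - 1)).toNat = E := by omega
    have e5 : (2 * (n:ℤ) + (ν + 1)).toNat = E := by omega
    have e6 : (2 * ((n:ℤ) + 1) + ν).toNat = E + 1 := by omega
    have hν : (ν : ℝ) = ((K : ℝ) + 1) - ((n:ℝ) + 1) := by
      have : ν = ((K : ℤ) + 1) - ((n:ℤ) + 1) := by omega
      exact_mod_cast this
    rw [e1, e2, e3, e4, e5, e6, hν]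
    simp only [Nat.factorial_succ, Nat.cast_mul, Nat.cast_add, Nat.cast_one, pow_succ]
    have h1 : ((n.factorial : ℝ)) ≠ 0 := by positivity
    have h2 : ((K.factorial : ℝ)) ≠ 0 := by positivity
    have h3 : ((n:ℝ) + 1) ≠ 0 := by positivity
    have h4 : ((K:ℝ) + 1) ≠ 0 := by positivity
    field_simp
    ring

lemma besselJ2_eq (ν : ℤ) (θ : ℝ) : besselJ2 ν θ = ∑' m, bterm θ ν m := rfl


lemma besselJ2_rec (θ : ℝ) (ν : ℤ) :
    θ * besselJ2 (ν - 1) θ + θ * besselJ2 (ν + 1) θ = ν * besselJ2 ν θ := by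
  have s1 : Summable fun m => θ * bterm θ (ν - 1) m := (bterm_summable θ (ν - 1)).mul_left θ
  have s2 : Summable fun m => θ * bterm θ (ν + 1) m := (bterm_summable θ (ν + 1)).mul_left θ
  set h : ℕ → ℝ := fun m => if m = 0 then 0 else θ * bterm θ (ν + 1) (m - 1) with hh
  have hsh : ∀ m : ℕ, h (m + 1) = θ * bterm θ (ν + 1) m := fun m => by simp [hh]
  have sh : Summable h := by
    rw [← summable_nat_add_iff 1]
    simpa only [hsh] using s2
  have e2 : θ * besselJ2 (ν + 1) θ = ∑' m, h m := by
    rw [besselJ2_eq, ← tsum_mul_left, Summable.tsum_eq_zero_add sh]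
    simp only [hsh, hh]
    simp
  calc θ * besselJ2 (ν - 1) θ + θ * besselJ2 (ν + 1) θ
      = ∑' m, (θ * bterm θ (ν - 1) m + h m) := by
        rw [besselJ2_eq, ← tsum_mul_left, e2, Summable.tsum_add s1 sh]
    _ = ∑' m, ν * bterm θ ν m := by
        congr 1; funext m
        cases m with
        | zero => simpa [hh] using bterm_rec_zero θ ν
        | succ n => rw [hsh]; exact bterm_rec_succ θ ν n
    _ = ν * besselJ2 ν θ := by rw [besselJ2_eq, tsum_mul_left]
lemma expser_summable (θ : ℝ) : Summable (fun m : ℕ => θ ^ (2 * m) / (m.factorial : ℝ)) := by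
  simpa [pow_mul] using Real.summable_pow_div_factorial (θ ^ 2)

lemma besselJ2_nat_abs_le (θ : ℝ) (hθ : 0 ≤ θ) (n : ℕ) :
    |besselJ2 (n : ℤ) θ| ≤ (∑' m : ℕ, θ ^ (2 * m) / (m.factorial : ℝ)) * (θ ^ n / n.factorial) := by
  have hs := expser_summable θ
  have hbound : ∀ m : ℕ, |bterm θ (n : ℤ) m| ≤ θ ^ (2 * m) / (m.factorial : ℝ) * (θ ^ n / n.factorial) := by
    intro m
    rw [bterm, if_neg (by omega)]
    have e1 : (2 * (m : ℤ) + n).toNat = 2 * m + n := by omega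
    have e2 : ((m : ℤ) + n).toNat = m + n := by omega
    rw [e1, e2, abs_div, abs_mul, abs_pow, abs_pow, abs_neg, abs_one, one_pow, one_mul,
      abs_of_nonneg hθ, abs_of_nonneg (by positivity)]
    rw [div_mul_div_comm, ← pow_add]
    gcongr
    · omega
  calc |besselJ2 (n : ℤ) θ| = |∑' m, bterm θ (n : ℤ) m| := by rw [besselJ2_eq]
    _ ≤ ∑' m, |bterm θ (n : ℤ) m| := by
        simpa [Real.norm_eq_abs] using
          norm_tsum_le_tsum_norm (f := bterm θ (n : ℤ)) (by simpa [Real.norm_eq_abs] using (bterm_summable θ (n:ℤ)).abs)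
    _ ≤ ∑' m, θ ^ (2 * m) / (m.factorial : ℝ) * (θ ^ n / n.factorial) := by
        have hs2 : Summable (fun m : ℕ => θ ^ (2 * m) / (m.factorial : ℝ) * (θ ^ n / n.factorial)) :=
          hs.mul_right (θ ^ n / n.factorial)
        exact Summable.tsum_le_tsum hbound ((bterm_summable θ n).abs) hs2
    _ = _ := tsum_mul_right

lemma besselJ2_tendsto (θ : ℝ) (hθ : 0 ≤ θ) (c : ℤ) :
    Tendsto (fun N : ℕ => besselJ2 (c + N) θ) atTop (𝓝 0) := by
  set C := ∑' m : ℕ, θ ^ (2 * m) / (m.factorial : ℝ) with hC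
  have key : Tendsto (fun n : ℕ => C * (θ ^ n / n.factorial)) atTop (𝓝 0) := by
    simpa using (FloorSemiring.tendsto_pow_div_factorial_atTop θ).const_mul C
  have hcomp : Tendsto (fun N : ℕ => (c + (N : ℤ)).toNat) atTop atTop := by
    apply tendsto_atTop_atTop.mpr
    intro b
    exact ⟨b + c.natAbs, fun n hn => by omega⟩
  have hb : ∀ᶠ N : ℕ in atTop, ‖besselJ2 (c + (N:ℤ)) θ‖ ≤ C * (θ ^ ((c + (N:ℤ)).toNat) / ((c + (N:ℤ)).toNat.factorial)) := by
    filter_upwards [eventually_ge_atTop c.natAbs] with N hN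
    have h0 : (0 : ℤ) ≤ c + N := by omega
    have he : besselJ2 (c + N) θ = besselJ2 (((c + (N:ℤ)).toNat : ℤ)) θ := by
      rw [Int.toNat_of_nonneg h0]
    rw [Real.norm_eq_abs, he]
    exact besselJ2_nat_abs_le θ hθ _
  exact squeeze_zero_norm' hb (key.comp hcomp)

lemma prod_summable (θ : ℝ) (hθ : 0 ≤ θ) (a b : ℤ) :
    Summable fun j : ℕ => besselJ2 (a + 1 + j) θ * besselJ2 (b + 1 + j) θ := by
  set C := ∑' m : ℕ, θ ^ (2 * m) / (m.factorial : ℝ) with hC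
  have hC0 : 0 ≤ C := tsum_nonneg (fun m => by positivity)
  set j0 := (a + 1).natAbs + (b + 1).natAbs with hj0
  rw [← summable_nat_add_iff j0]
  set p := (a + 1 + (j0 : ℤ)).toNat with hp
  set q := (b + 1 + (j0 : ℤ)).toNat with hq
  apply Summable.of_abs
  apply Summable.of_nonneg_of_le (fun i => abs_nonneg _)
    (g := fun i : ℕ => |besselJ2 (a + 1 + ((i + j0 : ℕ) : ℤ)) θ * besselJ2 (b + 1 + ((i + j0 : ℕ) : ℤ)) θ|)
    (f := fun i : ℕ => (C * C * θ ^ (p + q)) * ((θ ^ 2) ^ i / (i.factorial : ℝ)))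
  · intro i
    have ea : a + 1 + ((i + j0 : ℕ) : ℤ) = ((p + i : ℕ) : ℤ) := by push_cast; omega
    have eb : b + 1 + ((i + j0 : ℕ) : ℤ) = ((q + i : ℕ) : ℤ) := by push_cast; omega
    rw [abs_mul, ea, eb]
    have h1 := besselJ2_nat_abs_le θ hθ (p + i)
    have h2 := besselJ2_nat_abs_le θ hθ (q + i)
    calc |besselJ2 ((p + i : ℕ) : ℤ) θ| * |besselJ2 ((q + i : ℕ) : ℤ) θ|
        ≤ (C * (θ ^ (p + i) / (p + i).factorial)) * (C * (θ ^ (q + i) / (q + i).factorial)) :=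
          mul_le_mul h1 h2 (abs_nonneg _) (by positivity)
      _ = (C * C * θ ^ (p + q) * (θ ^ 2) ^ i) / (((p + i).factorial : ℝ) * ((q + i).factorial : ℝ)) := by
          have hP : ((p + i).factorial : ℝ) ≠ 0 := by positivity
          have hQ : ((q + i).factorial : ℝ) ≠ 0 := by positivity
          field_simp
          ring
      _ ≤ (C * C * θ ^ (p + q) * (θ ^ 2) ^ i) / ((i.factorial : ℝ)) := by
          have hle : ((i.factorial : ℝ)) ≤ ((p + i).factorial : ℝ) * ((q + i).factorial : ℝ) := by
            calc ((i.factorial : ℝ)) ≤ ((p + i).factorial : ℝ) := by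
                  exact_mod_cast Nat.factorial_le (Nat.le_add_left i p)
              _ ≤ ((p + i).factorial : ℝ) * ((q + i).factorial : ℝ) := by
                  apply le_mul_of_one_le_right (by positivity)
                  exact_mod_cast Nat.one_le_iff_ne_zero.mpr (Nat.factorial_ne_zero _)
          exact div_le_div_of_nonneg_left (by positivity) (by positivity) hle
      _ = (C * C * θ ^ (p + q)) * ((θ ^ 2) ^ i / (i.factorial : ℝ)) := by ring
  · exact (Real.summable_pow_div_factorial (θ ^ 2)).mul_left _

lemma step (θ : ℝ) (x y : ℤ) (hxy : ((x:ℝ) - y) ≠ 0) :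
    θ * (besselJ2 x θ * besselJ2 (y + 1) θ - besselJ2 (x + 1) θ * besselJ2 y θ) / ((x:ℝ) - y)
      - θ * (besselJ2 (x + 1) θ * besselJ2 (y + 2) θ - besselJ2 (x + 2) θ * besselJ2 (y + 1) θ) / ((x:ℝ) - y)
      = besselJ2 (x + 1) θ * besselJ2 (y + 1) θ := by
  have h1 := besselJ2_rec θ (x + 1)
  have h2 := besselJ2_rec θ (y + 1)
  rw [show x + 1 - 1 = x by ring, show x + 1 + 1 = x + 2 by ring] at h1
  rw [show y + 1 - 1 = y by ring, show y + 1 + 1 = y + 2 by ring] at h2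
  push_cast at h1 h2
  field_simp
  linear_combination besselJ2 (y + 1) θ * h1 - besselJ2 (x + 1) θ * h2

/-- discrete Bessel kernel identity: for `x ≠ y` in `ℤ + ½` and `θ > 0`,
`θ·(J_{x−½}J_{y+½} − J_{x+½}J_{y−½})/(x−y) = ∑_{k ∈ ℤ_{≥0}+½} J_{x+k} J_{y+k}`,
all Bessel functions evaluated at `2θ`.  Half-integers are encoded by
`x = a + ½`, `y = b + ½`, `k = j + ½` with `a, b : ℤ`, `j : ℕ`; thus `x − ½ = a`,
`x + ½ = a + 1`, `x − y = a − b`, and `x + k = a + 1 + j`.  The right-hand side is a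
convergent series. -/
theorem discrete_bessel_kernel (θ : ℝ) (hθ : 0 < θ) (a b : ℤ) (hab : a ≠ b) :
    (Summable fun j : ℕ => besselJ2 (a + 1 + j) θ * besselJ2 (b + 1 + j) θ) ∧
    θ * (besselJ2 a θ * besselJ2 (b + 1) θ - besselJ2 (a + 1) θ * besselJ2 b θ)
        / ((a : ℝ) - (b : ℝ))
      = ∑' j : ℕ, besselJ2 (a + 1 + j) θ * besselJ2 (b + 1 + j) θ := by
  have hS := prod_summable θ hθ.le a b
  refine ⟨hS, ?_⟩
  have hab' : ((a:ℝ) - b) ≠ 0 := sub_ne_zero.mpr (by exact_mod_cast hab)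
  set T : ℕ → ℝ := fun n =>
    θ * (besselJ2 (a + n) θ * besselJ2 (b + n + 1) θ - besselJ2 (a + n + 1) θ * besselJ2 (b + n) θ)
      / ((a : ℝ) - b) with hT
  have hstep : ∀ n : ℕ, T n - T (n + 1) = besselJ2 (a + 1 + n) θ * besselJ2 (b + 1 + n) θ := by
    intro n
    have hxy : (((a + n : ℤ) : ℝ) - ((b + n : ℤ) : ℝ)) ≠ 0 := by
      push_cast; intro h; apply hab'; linarith
    have := step θ (a + n) (b + n) hxy
    rw [show (a + (n:ℤ)) + 1 = a + n + 1 by ring, show (b + (n:ℤ)) + 1 = b + n + 1 by ring,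
      show (a + (n:ℤ)) + 2 = a + (n+1) + 1 by ring, show (b + (n:ℤ)) + 2 = b + (n+1) + 1 by ring] at this
    have ecast : (((a + n : ℤ) : ℝ) - ((b + n : ℤ) : ℝ)) = (a:ℝ) - b := by push_cast; ring
    rw [ecast] at this
    simp only [hT]
    push_cast
    push_cast at this
    convert this using 3 <;> push_cast <;> ring_nf
  have hpsum : ∀ N : ℕ, ∑ j ∈ Finset.range N, besselJ2 (a + 1 + j) θ * besselJ2 (b + 1 + j) θ
      = T 0 - T N := by
    intro N
    induction N with
    | zero => simp
    | succ N ih => rw [Finset.sum_range_succ, ih, ← hstep N]; ring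
  have hT0 : Tendsto T atTop (𝓝 0) := by
    have t1 : Tendsto (fun N : ℕ => besselJ2 (a + N) θ) atTop (𝓝 0) := besselJ2_tendsto θ hθ.le a
    have t2 : Tendsto (fun N : ℕ => besselJ2 (b + N + 1) θ) atTop (𝓝 0) := by
      have := besselJ2_tendsto θ hθ.le (b + 1)
      refine this.congr fun N => ?_
      rw [show b + 1 + (N:ℤ) = b + N + 1 by ring]
    have t3 : Tendsto (fun N : ℕ => besselJ2 (a + N + 1) θ) atTop (𝓝 0) := by
      have := besselJ2_tendsto θ hθ.le (a + 1)
      refine this.congr fun N => ?_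
      rw [show a + 1 + (N:ℤ) = a + N + 1 by ring]
    have t4 : Tendsto (fun N : ℕ => besselJ2 (b + N) θ) atTop (𝓝 0) := besselJ2_tendsto θ hθ.le b
    have : Tendsto (fun N : ℕ => θ * (besselJ2 (a + N) θ * besselJ2 (b + N + 1) θ
        - besselJ2 (a + N + 1) θ * besselJ2 (b + N) θ) / ((a:ℝ) - b)) atTop (𝓝 (θ * (0 * 0 - 0 * 0) / ((a:ℝ) - b))) := by
      exact (((t1.mul t2).sub (t3.mul t4)).const_mul θ).div_const _
    simpa using this
  have h1 : Tendsto (fun N => ∑ j ∈ Finset.range N, besselJ2 (a + 1 + j) θ * besselJ2 (b + 1 + j) θ)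
      atTop (𝓝 (∑' j : ℕ, besselJ2 (a + 1 + j) θ * besselJ2 (b + 1 + j) θ)) :=
    hS.hasSum.tendsto_sum_nat
  have h2 : Tendsto (fun N => ∑ j ∈ Finset.range N, besselJ2 (a + 1 + j) θ * besselJ2 (b + 1 + j) θ)
      atTop (𝓝 (T 0)) := by
    simp only [hpsum]
    simpa using tendsto_const_nhds.sub hT0
  have := tendsto_nhds_unique h2 h1
  rw [← this, hT]
  norm_num
end

section
/- Let X be a finite set and K an X × X Hermitian matrix. If there exists a point process on subsets of X whose correlation functions are ρ_n(x_1,...,x_n) = det[K(x_i,x_j)] (in particular all these determinants and all resulting probabilities are nonnegative), then 0 ≤ K ≤ 1, i.e. both K and 1 − K are positive semidefinite. -/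
/-!
Each principal minor of `K` is a correlation `ρ_k ≥ 0`. By inclusion–exclusion each principal
minor of `1 - K` is a gap probability `Pr{config ∩ I = ∅} ≥ 0`; equivalently, `1 - K` is a
correlation kernel of the complementary process `S ↦ Sᶜ`. A Hermitian matrix `A` whose principal
minors are all nonnegative is positive semidefinite: `det (1 + r • A) = ∑ₛ r ^ |s| det A_s ≥ 1`
for `r ≥ 0`, so `A` has no eigenvalue `-1 / r < 0`.
-/

open scoped ComplexOrder

open Finset

namespace Matrix

variable {n : Type*} [Fintype n] [DecidableEq n]

theorem det_one_add_smul_eq_sum_det_submatrix {R : Type*} [CommRing R] (r : R)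
    (M : Matrix n n R) :
    det (1 + r • M) = ∑ s : Finset n, r ^ s.card * (M.submatrix (↑) (↑) : Matrix s s R).det := by
  rw [add_comm]
  change detRowAlternating ((r • M).row + (1 : Matrix n n R).row) = _
  rw [AlternatingMap.map_add_univ]
  refine sum_congr rfl fun s _ => ?_
  set P := s.piecewise M.row (1 : Matrix n n R).row
  have hsmul : s.piecewise (r • M).row (1 : Matrix n n R).row
      = s.piecewise (fun i => r • P i) P := by
    ext i : 1
    simp only [P, Finset.piecewise]
    split_ifs <;> rfl
  calc detRowAlternating (s.piecewise (r • M).row (1 : Matrix n n R).row)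
      = detRowAlternating.toMultilinearMap (s.piecewise (fun i => r • P i) P) := by
        rw [hsmul]; rfl
    _ = r ^ s.card * det (of P) := by
        rw [MultilinearMap.map_piecewise_smul, prod_const]; rfl
    _ = _ := by rw [det_piecewise_one_eq_submatrix_det]

theorem IsHermitian.posSemidef_of_forall_det_submatrix_nonneg {𝕜 : Type*} [RCLike 𝕜]
    {A : Matrix n n 𝕜} (hA : A.IsHermitian)
    (hminor : ∀ s : Finset n, 0 ≤ (A.submatrix (↑) (↑) : Matrix s s 𝕜).det) : A.PosSemidef := by
  refine hA.posSemidef_iff_eigenvalues_nonneg.mpr fun i => ?_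
  by_contra! hneg
  set r : ℝ := -(hA.eigenvalues i)⁻¹
  have hr : 0 < r := neg_pos.mpr (inv_lt_zero.mpr hneg)
  have hsingular : det (1 + (r : 𝕜) • A) = 0 := by
    refine exists_mulVec_eq_zero_iff.mp ⟨hA.eigenvectorBasis i, ?_, ?_⟩
    · simpa using hA.eigenvectorBasis.orthonormal.ne_zero i
    · rw [add_mulVec, one_mulVec, smul_mulVec, hA.mulVec_eigenvectorBasis,
        ← RCLike.real_smul_eq_coe_smul (K := 𝕜) r, smul_smul, neg_mul,
        inv_mul_cancel₀ hneg.ne, neg_one_smul, add_neg_cancel]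
  have hone_le : 1 ≤ det (1 + (r : 𝕜) • A) := by
    have hterm_nonneg : ∀ s ∈ (univ : Finset (Finset n)),
        0 ≤ (r : 𝕜) ^ s.card * (A.submatrix (↑) (↑) : Matrix s s 𝕜).det := fun s _ =>
      mul_nonneg (pow_nonneg (RCLike.ofReal_nonneg.mpr hr.le) _) (hminor s)
    rw [det_one_add_smul_eq_sum_det_submatrix]
    calc (1 : 𝕜)
        = (r : 𝕜) ^ (∅ : Finset n).card *
            (A.submatrix (↑) (↑) : Matrix (∅ : Finset n) _ 𝕜).det := by simp
      _ ≤ _ := single_le_sum hterm_nonneg (mem_univ ∅)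
  exact zero_lt_one.not_ge (hsingular ▸ hone_le)

end Matrix

def IsCorrelationKernel {X : Type*} [Fintype X] [DecidableEq X] (K : Matrix X X ℂ)
    (p : Finset X → ℝ) : Prop :=
  ∀ (n : ℕ) (a : Fin n → X), Function.Injective a →
    (↑(∑ S ∈ univ.filter (fun S : Finset X => ∀ i, a i ∈ S), p S) : ℂ)
      = Matrix.det (Matrix.of fun i j : Fin n => K (a i) (a j))

namespace IsCorrelationKernel

variable {X : Type*} [Fintype X] [DecidableEq X] {K : Matrix X X ℂ} {p : Finset X → ℝ}

theorem det_submatrix (hK : IsCorrelationKernel K p) {m : Type*} [Fintype m] [DecidableEq m]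
    {b : m → X} (hb : Function.Injective b) :
    (K.submatrix b b).det = ↑(∑ S ∈ univ.filter (fun S : Finset X => ∀ i, b i ∈ S), p S) := by
  let e := (Fintype.equivFin m).symm
  have hfilter : univ.filter (fun S : Finset X => ∀ i, b (e i) ∈ S)
      = univ.filter (fun S : Finset X => ∀ i, b i ∈ S) :=
    filter_congr fun S _ => e.forall_congr_right (q := (b · ∈ S))
  rw [← Matrix.det_submatrix_equiv_self e, ← hfilter]
  exact (hK _ _ (hb.comp e.injective)).symm

theorem one_sub (hK : IsCorrelationKernel K p) :
    IsCorrelationKernel (1 - K) (fun S => p Sᶜ) := by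
  intro n a ha
  let hits : Fin n → Finset (Finset X) := fun i => univ.filter (a i ∈ ·)
  have hinf : ∀ t : Finset (Fin n), t.inf hits = univ.filter (fun S => ∀ i : t, a i ∈ S) := by
    intro t; ext S; simp [hits, mem_inf]
  have hholes : ∑ S ∈ univ.filter (fun S : Finset X => ∀ i, a i ∈ S), p Sᶜ
      = ∑ S ∈ univ.inf fun i => (hits i)ᶜ, p S := by
    refine sum_nbij' (·ᶜ) (·ᶜ) ?_ ?_ ?_ ?_ ?_ <;> simp [hits, mem_inf]
  have hminors : Matrix.det (Matrix.of fun i j : Fin n => (1 - K) (a i) (a j))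
      = ∑ t : Finset (Fin n), (-1 : ℂ) ^ t.card * ((∑ S ∈ t.inf hits, p S : ℝ) : ℂ) := by
    have hsub : (1 - K).submatrix a a = 1 + (-1 : ℂ) • K.submatrix a a := by
      rw [neg_one_smul, ← sub_eq_add_neg, ← Matrix.submatrix_one a ha]; rfl
    change Matrix.det ((1 - K).submatrix a a) = _
    rw [hsub, Matrix.det_one_add_smul_eq_sum_det_submatrix]
    refine sum_congr rfl fun t _ => ?_
    rw [hinf, Matrix.submatrix_submatrix, hK.det_submatrix (ha.comp Subtype.val_injective)]
    rfl
  rw [hholes, hminors, Complex.ofReal_sum,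
    inclusion_exclusion_sum_inf_compl (f := fun S => (p S : ℂ)), powerset_univ]
  simp [zsmul_eq_mul]

theorem posSemidef (hK : IsCorrelationKernel K p) (hKh : K.IsHermitian) (hp : ∀ S, 0 ≤ p S) :
    K.PosSemidef :=
  hKh.posSemidef_of_forall_det_submatrix_nonneg fun s => by
    rw [hK.det_submatrix Subtype.val_injective]
    exact Complex.zero_le_real.mpr (sum_nonneg fun S _ => hp S)

end IsCorrelationKernel

theorem determinantal_kernel_le_one_general {X : Type*} [Fintype X] [DecidableEq X]
    (K : Matrix X X ℂ) (hK : K.IsHermitian)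
    (p : Finset X → ℝ) (hp0 : ∀ S, 0 ≤ p S)
    (hcorr : ∀ (n : ℕ) (a : Fin n → X), Function.Injective a →
      (↑(∑ S ∈ Finset.univ.filter (fun S : Finset X => ∀ i, a i ∈ S), p S) : ℂ)
        = Matrix.det (Matrix.of fun i j : Fin n => K (a i) (a j))) :
    K.PosSemidef ∧ (1 - K).PosSemidef := by
  have hkernel : IsCorrelationKernel K p := hcorr
  exact ⟨hkernel.posSemidef hK hp0,
    hkernel.one_sub.posSemidef (Matrix.isHermitian_one.sub hK) fun S => hp0 Sᶜ⟩

/-- Macchi–Soshnikov, 'only if' direction, finite case: if a Hermitian matrix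
`K` on a finite set `X` is the correlation kernel of a (genuine, probability) point process
on subsets of `X`, then `0 ≤ K ≤ 1`, i.e. both `K` and `1 − K` are positive semidefinite. -/
theorem determinantal_kernel_le_one {X : Type*} [Fintype X] [DecidableEq X]
    (K : Matrix X X ℂ) (hK : K.IsHermitian)
    (p : Finset X → ℝ) (hp0 : ∀ S, 0 ≤ p S) (hp1 : ∑ S : Finset X, p S = 1)
    (hcorr : ∀ (n : ℕ) (a : Fin n → X), Function.Injective a →
      (↑(∑ S ∈ Finset.univ.filter (fun S : Finset X => ∀ i, a i ∈ S), p S) : ℂ)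
        = Matrix.det (Matrix.of fun i j : Fin n => K (a i) (a j))) :
    K.PosSemidef ∧ (1 - K).PosSemidef :=
  determinantal_kernel_le_one_general K hK p hp0 hcorr
end
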